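/- arXiv:2210.14857 — 4 statements merged into one kernel-verified Lean document; each statement's English description precedes it below -/
import Mathlib

section
/- Let 2 ≤ N ≤ d and A, B, C₁ > 1. There exists ε₀* ∈ (0,1), depending only on B and N, such that for every ε₀ ∈ (0, ε₀*] and every ε₁ ∈ (0,1) there exist constants 0 < c ≤ C, depending only on d, N, A, B, C₁, ε₀ and ε₁, with the following property. Let γ ∈ 𝔊(B,N), λ ≥ 2, 0 < ρ ≤ B^{−2d}, let ξ ∈ ℝ^d satisfy C₁λ ≤ |ξ| ≤ 2C₁λ, and let s, σ₀ ∈ I be such that (a) ⟨γ^{(N−1)}(σ₀), ξ⟩ = 0, (b) |⟨γ^{(N)}(u), ξ⟩| ≥ (10A)^{−1}|ξ| for all u ∈ I, and (c) ε₁^{−2}/4 ≤ Σ_{i=1}^{N−1} |ε₀^{−1} λ^{−1} ρ^{i−N} ⟨γ^{(i)}(σ₀), ξ⟩|^{2/(N−i)} + |ε₀^{−1} ρ^{−1}(s − σ₀)|² ≤ 4 ε₁^{−2}. Then c λ ≤ Σ_{i=1}^{N−1} ρ^{i−N} |⟨γ^{(i)}(s), ξ⟩| ≤ C λ. -/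
/-
Write `g j t = ⟪γ⁽ʲ⁾(t), ξ⟫`. The upper half of (c) bounds `|g i σ₀|` by `ε₀ λ (2 ε₁⁻¹ ρ)^(N-i)` and
`|s - σ₀|` by `2 ε₁⁻¹ ε₀ ρ`; integrating down from `|g N| ≤ 2 B C₁ λ` then gives
`|g i| ≤ 2 B C₁ λ (4 ε₁⁻¹ ρ)^(N-i)` between `σ₀` and `s`, which is the upper bound.
For the lower bound, fix a small `δ`. If `|s - σ₀| ≥ δ ρ`, then `g (N-1) σ₀ = 0` and `|g N| ≳ λ`
give `|g (N-1) s| ≳ λ δ ρ` by the mean value theorem. If `|s - σ₀| < δ ρ`, the `s`-part of (c) is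
small, so the lower half of (c) forces some `|g i σ₀| ≳ ε₀ λ ρ^(N-i)`, and by the previous
estimate `g i` moves by less than half of that between `σ₀` and `s`. Any `ε₀ ≤ 1` works.
-/

open MeasureTheory Real Matrix
open scoped RealInnerProductSpace ENNReal

noncomputable section

abbrev E (d : ℕ) : Type := EuclideanSpace ℝ (Fin d)

def segI : Set ℝ := Set.Icc (-1) 1

/-- The class of curves 𝔊(B,L): `C^{2d}` bounds by `B` and the sum of squares of the `L×L`
minors of `(γ⁽¹⁾(s) ⋯ γ⁽ᴸ⁾(s))`, i.e. the Gram determinant, at least `B⁻²`. -/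
def CurveClass {d : ℕ} (B : ℝ) (L : ℕ) (γ : ℝ → E d) : Prop :=
  ContDiff ℝ ((2 * d : ℕ) : ℕ∞) γ ∧
  (∀ j ≤ 2 * d, ∀ s ∈ segI, ‖iteratedDeriv j γ s‖ ≤ B) ∧
  (∀ s ∈ segI,
    (B ^ 2)⁻¹ ≤
      (((Matrix.of fun i (j : Fin L) => iteratedDeriv ((j : ℕ) + 1) γ s i))ᵀ *
        (Matrix.of fun (i : Fin d) (j : Fin L) => iteratedDeriv ((j : ℕ) + 1) γ s i)).det)

lemma zpow_natCast_sub_natCast_eq_inv_pow {G₀ : Type*} [GroupWithZero G₀] (a : G₀) {i n : ℕ}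
    (hi : i ≤ n) : a ^ ((i : ℤ) - (n : ℤ)) = (a ^ (n - i))⁻¹ := by
  rw [show (i : ℤ) - n = -((n - i : ℕ) : ℤ) by omega, _root_.zpow_neg, zpow_natCast]

lemma abs_inv_mul_le_iff {w x y : ℝ} (hw : 0 < w) : |w⁻¹ * x| ≤ y ↔ |x| ≤ w * y := by
  rw [abs_mul, abs_inv, abs_of_pos hw, inv_mul_le_iff₀ hw]

lemma le_abs_inv_mul_iff {w x y : ℝ} (hw : 0 < w) : y ≤ |w⁻¹ * x| ↔ w * y ≤ |x| := by
  rw [abs_mul, abs_inv, abs_of_pos hw, le_inv_mul_iff₀ hw]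

lemma le_pow_of_rpow_two_div_le_sq {x y : ℝ} {m : ℕ} (hx : 0 ≤ x) (hy : 0 ≤ y) (hm : m ≠ 0)
    (h : x ^ ((2 : ℝ) / m) ≤ y ^ 2) : x ≤ y ^ m := by
  rw [← inv_div (m : ℝ) 2, Real.rpow_inv_le_iff_of_pos hx (by positivity) (by positivity),
    ← Real.rpow_natCast y 2, ← Real.rpow_mul hy] at h
  rwa [Nat.cast_ofNat, mul_div_cancel₀ _ two_ne_zero, Real.rpow_natCast] at h

lemma min_one_pow_le_of_le_rpow_two_div {x β : ℝ} {m n : ℕ} (hx : 0 ≤ x) (hβ : 0 < β)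
    (hm : m ≠ 0) (hmn : m ≤ n) (h : β ≤ x ^ ((2 : ℝ) / m)) : min 1 β ^ n ≤ x := by
  rw [← inv_div (m : ℝ) 2, Real.le_rpow_inv_iff_of_pos hβ.le hx (by positivity)] at h
  calc min 1 β ^ n = min 1 β ^ (n : ℝ) := (Real.rpow_natCast _ n).symm
    _ ≤ min 1 β ^ ((m : ℝ) / 2) := by
        apply Real.rpow_le_rpow_of_exponent_ge (lt_min one_pos hβ) (min_le_left _ _)
        have : (m : ℝ) ≤ n := by exact_mod_cast hmn
        linarith
    _ ≤ β ^ ((m : ℝ) / 2) := by gcongr; exact min_le_right _ _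
    _ ≤ x := h

lemma mul_abs_sub_le_abs_sub_of_le_abs_deriv {f f' : ℝ → ℝ} {a b μ : ℝ}
    (hf : ∀ t, HasDerivAt f (f' t) t) (hμ : ∀ u ∈ Set.uIcc a b, μ ≤ |f' u|) :
    μ * |b - a| ≤ |f b - f a| := by
  wlog hab : a < b generalizing a b
  · rcases (not_lt.1 hab).lt_or_eq with hba | rfl
    · rw [abs_sub_comm, abs_sub_comm (f b)]
      exact this (Set.uIcc_comm a b ▸ hμ) hba
    · simp
  obtain ⟨u, hu, hslope⟩ := exists_hasDerivAt_eq_slope f f' hab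
    (fun t _ => (hf t).continuousAt.continuousWithinAt) (fun t _ => hf t)
  rw [eq_div_iff (sub_pos.2 hab).ne'] at hslope
  rw [← hslope, abs_mul]
  exact mul_le_mul_of_nonneg_right (hμ u (Set.Ioo_subset_Icc_self.trans Set.Icc_subset_uIcc hu))
    (abs_nonneg _)

lemma abs_le_mul_two_mul_pow_of_hasDerivAt {g : ℕ → ℝ → ℝ} {J : Set ℝ} (hJ : Convex ℝ J)
    {k n : ℕ} {σ h M : ℝ} (hσ : σ ∈ J) (hh : 0 ≤ h)
    (hg : ∀ j, k ≤ j → j < n → ∀ t, HasDerivAt (g j) (g (j + 1) t) t)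
    (hgn : ∀ t ∈ J, |g n t| ≤ M) (hgσ : ∀ j, k ≤ j → j < n → |g j σ| ≤ M * h ^ (n - j))
    (hJσ : ∀ t ∈ J, |t - σ| ≤ h) :
    ∀ j, k ≤ j → j ≤ n → ∀ t ∈ J, |g j t| ≤ M * (2 * h) ^ (n - j) := by
  have hM : 0 ≤ M := (abs_nonneg _).trans (hgn σ hσ)
  suffices ∀ m j, j + m = n → k ≤ j → ∀ t ∈ J, |g j t| ≤ M * (2 * h) ^ m by
    intro j hkj hjn
    exact this (n - j) j (by omega) hkj
  intro m
  induction m with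
  | zero => intro j hj _; simpa [← hj] using hgn
  | succ m ih =>
    intro j hj hkj t ht
    have hderiv : ∀ t ∈ J, |g (j + 1) t| ≤ M * (2 * h) ^ m := ih (j + 1) (by omega) (by omega)
    have hincr : |g j t - g j σ| ≤ M * (2 * h) ^ m * |t - σ| := by
      simpa [Real.norm_eq_abs] using hJ.norm_image_sub_le_of_norm_hasDerivWithin_le
        (fun u _ => (hg j hkj (by omega) u).hasDerivWithinAt) (by simpa using hderiv) hσ ht
    have hσj : |g j σ| ≤ M * h ^ (m + 1) := by
      simpa [show n - j = m + 1 by omega] using hgσ j hkj (by omega)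
    have h2m : (1 : ℝ) ≤ 2 ^ m := one_le_pow₀ one_le_two
    calc |g j t| ≤ |g j σ| + |g j t - g j σ| := by linarith [abs_sub_abs_le_abs_sub (g j t) (g j σ)]
      _ ≤ M * h ^ (m + 1) + M * (2 * h) ^ m * h := by
          gcongr
          exact hincr.trans (by gcongr; exact hJσ t ht)
      _ = M * h ^ (m + 1) * (1 + 2 ^ m) := by ring
      _ ≤ M * h ^ (m + 1) * (2 ^ m + 2 ^ m) := by gcongr
      _ = M * (2 * h) ^ (m + 1) := by ring

-- For `g i = ⟪γ⁽ⁱ⁾(·), ξ⟫` this is the quantity that hypothesis (c) pins between `ε₁⁻² / 4` and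
-- `4 ε₁⁻²`.
def scaledDist (N : ℕ) (ε₀ lam ρ : ℝ) (g : ℕ → ℝ → ℝ) (σ s : ℝ) : ℝ :=
  (∑ i ∈ Finset.Icc 1 (N - 1),
      |ε₀⁻¹ * lam⁻¹ * ρ ^ ((i : ℤ) - (N : ℤ)) * g i σ| ^ ((2 : ℝ) / ((N : ℝ) - (i : ℝ))))
    + |ε₀⁻¹ * ρ⁻¹ * (s - σ)| ^ 2

def weightedSum (N : ℕ) (ρ : ℝ) (g : ℕ → ℝ → ℝ) (s : ℝ) : ℝ :=
  ∑ i ∈ Finset.Icc 1 (N - 1), ρ ^ ((i : ℤ) - (N : ℤ)) * |g i s|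

section Scalar

variable {N : ℕ} {g : ℕ → ℝ → ℝ} {ε₀ lam ρ σ s η b : ℝ}

lemma scaledDist_term_eq {i : ℕ} (hi : i ≤ N) :
    |ε₀⁻¹ * lam⁻¹ * ρ ^ ((i : ℤ) - (N : ℤ)) * g i σ| ^ ((2 : ℝ) / ((N : ℝ) - (i : ℝ)))
      = |(ε₀ * lam * ρ ^ (N - i))⁻¹ * g i σ| ^ ((2 : ℝ) / ((N - i : ℕ) : ℝ)) := by
  rw [zpow_natCast_sub_natCast_eq_inv_pow _ hi, Nat.cast_sub hi, mul_inv, mul_inv]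

lemma abs_sub_le_of_scaledDist_le (hε₀ : 0 < ε₀) (hρ : 0 < ρ) (hη : 0 ≤ η)
    (h : scaledDist N ε₀ lam ρ g σ s ≤ 4 * η ^ 2) : |s - σ| ≤ ε₀ * ρ * (2 * η) := by
  have hsum : 0 ≤ ∑ i ∈ Finset.Icc 1 (N - 1),
      |ε₀⁻¹ * lam⁻¹ * ρ ^ ((i : ℤ) - (N : ℤ)) * g i σ| ^ ((2 : ℝ) / ((N : ℝ) - (i : ℝ))) :=
    Finset.sum_nonneg fun i _ => by positivity
  have hsq : |ε₀⁻¹ * ρ⁻¹ * (s - σ)| ^ 2 ≤ (2 * η) ^ 2 := by unfold scaledDist at h; linarith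
  rw [← abs_inv_mul_le_iff (by positivity), mul_inv]
  exact abs_le_of_sq_le_sq (by rwa [sq_abs] at hsq) (by positivity)

lemma abs_apply_le_of_scaledDist_le (hε₀ : 0 < ε₀) (hlam : 0 < lam) (hρ : 0 < ρ) (hη : 0 ≤ η)
    (h : scaledDist N ε₀ lam ρ g σ s ≤ 4 * η ^ 2) {i : ℕ} (hi : i ∈ Finset.Icc 1 (N - 1)) :
    |g i σ| ≤ ε₀ * lam * (2 * η * ρ) ^ (N - i) := by
  have hiN : i < N := by rw [Finset.mem_Icc] at hi; omega
  have hterm := (Finset.single_le_sum (fun j _ => by positivity) hi).trans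
    (le_add_of_le_of_nonneg le_rfl (sq_nonneg _)) |>.trans h
  rw [scaledDist_term_eq hiN.le, show 4 * η ^ 2 = (2 * η) ^ 2 by ring] at hterm
  have := le_pow_of_rpow_two_div_le_sq (abs_nonneg _) (by positivity) (by omega) hterm
  rw [abs_inv_mul_le_iff (by positivity)] at this
  exact this.trans_eq (by ring)

lemma abs_le_of_scaledDist_le_of_mem_uIcc (hg : ∀ j < N, ∀ t, HasDerivAt (g j) (g (j + 1) t) t)
    (hε₀ : 0 < ε₀) (hε₀1 : ε₀ ≤ 1) (hlam : 0 < lam) (hρ : 0 < ρ) (hη : 0 ≤ η) (hb : 1 ≤ b)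
    (hgN : ∀ t ∈ Set.uIcc σ s, |g N t| ≤ b * lam) (h : scaledDist N ε₀ lam ρ g σ s ≤ 4 * η ^ 2)
    {i : ℕ} (hi1 : 1 ≤ i) (hiN : i ≤ N) {t : ℝ} (ht : t ∈ Set.uIcc σ s) :
    |g i t| ≤ b * lam * (4 * η * ρ) ^ (N - i) := by
  have hgσ : ∀ j, 1 ≤ j → j < N → |g j σ| ≤ b * lam * (2 * η * ρ) ^ (N - j) := fun j hj1 hjN =>
    (abs_apply_le_of_scaledDist_le hε₀ hlam hρ hη h (Finset.mem_Icc.2 ⟨hj1, by omega⟩)).trans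
      (by gcongr; nlinarith)
  have hJσ : ∀ t ∈ Set.uIcc σ s, |t - σ| ≤ 2 * η * ρ := fun t ht =>
    (Set.abs_sub_left_of_mem_uIcc ht).trans <| (abs_sub_le_of_scaledDist_le hε₀ hρ hη h).trans
      (by nlinarith [mul_nonneg (mul_nonneg (sub_nonneg.2 hε₀1) hρ.le) hη])
  have := abs_le_mul_two_mul_pow_of_hasDerivAt (convex_uIcc σ s) Set.left_mem_uIcc
    (by positivity) (fun j _ hj => hg j hj) hgN hgσ hJσ i hi1 hiN t ht
  rwa [← mul_assoc, ← mul_assoc, show (2 : ℝ) * 2 = 4 by norm_num] at this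

lemma weightedSum_le (hg : ∀ j < N, ∀ t, HasDerivAt (g j) (g (j + 1) t) t)
    (hε₀ : 0 < ε₀) (hε₀1 : ε₀ ≤ 1) (hlam : 0 < lam) (hρ : 0 < ρ) (hη : 1 ≤ η) (hb : 1 ≤ b)
    (hgN : ∀ t ∈ Set.uIcc σ s, |g N t| ≤ b * lam) (h : scaledDist N ε₀ lam ρ g σ s ≤ 4 * η ^ 2) :
    weightedSum N ρ g s ≤ (N - 1 : ℕ) * (b * (4 * η) ^ N) * lam := by
  have hterm : ∀ i ∈ Finset.Icc 1 (N - 1),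
      ρ ^ ((i : ℤ) - (N : ℤ)) * |g i s| ≤ b * (4 * η) ^ N * lam := by
    intro i hi
    rw [Finset.mem_Icc] at hi
    have hgi := abs_le_of_scaledDist_le_of_mem_uIcc hg hε₀ hε₀1 hlam hρ (by linarith) hb hgN h
      hi.1 (by omega) Set.right_mem_uIcc
    calc ρ ^ ((i : ℤ) - (N : ℤ)) * |g i s|
        ≤ (ρ ^ (N - i))⁻¹ * (b * lam * (4 * η * ρ) ^ (N - i)) := by
          rw [zpow_natCast_sub_natCast_eq_inv_pow _ (by omega)]; gcongr
      _ = b * (4 * η) ^ (N - i) * lam := by field_simp; ring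
      _ ≤ b * (4 * η) ^ N * lam := by
          gcongr
          · linarith
          · omega
  calc weightedSum N ρ g s ≤ (Finset.Icc 1 (N - 1)).card • (b * (4 * η) ^ N * lam) :=
        Finset.sum_le_card_nsmul _ _ _ hterm
    _ = (N - 1 : ℕ) * (b * (4 * η) ^ N) * lam := by simp [mul_assoc]

lemma le_weightedSum_of_le {c : ℝ} (hρ : 0 < ρ) {i : ℕ} (hi : i ∈ Finset.Icc 1 (N - 1))
    (h : ρ ^ (N - i) * c ≤ |g i s|) : c ≤ weightedSum N ρ g s := by
  have hiN : i ≤ N := by rw [Finset.mem_Icc] at hi; omega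
  calc c = (ρ ^ (N - i))⁻¹ * (ρ ^ (N - i) * c) := by field_simp
    _ ≤ ρ ^ ((i : ℤ) - (N : ℤ)) * |g i s| := by
        rw [zpow_natCast_sub_natCast_eq_inv_pow _ hiN]; gcongr
    _ ≤ weightedSum N ρ g s :=
        Finset.single_le_sum (f := fun (i : ℕ) => ρ ^ ((i : ℤ) - (N : ℤ)) * |g i s|)
          (fun j _ => by positivity) hi

lemma le_weightedSum_of_far {μ δ : ℝ} (hN : 2 ≤ N)
    (hg : ∀ j < N, ∀ t, HasDerivAt (g j) (g (j + 1) t) t) (hρ : 0 < ρ) (hμ0 : 0 ≤ μ)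
    (hμ : ∀ u ∈ Set.uIcc σ s, μ ≤ |g N u|) (hσ : g (N - 1) σ = 0) (hfar : δ * ρ ≤ |s - σ|) :
    μ * δ ≤ weightedSum N ρ g s := by
  have hmvt : μ * |s - σ| ≤ |g (N - 1) s| := by
    have := mul_abs_sub_le_abs_sub_of_le_abs_deriv
      (fun t => by simpa [Nat.sub_add_cancel (by omega : 1 ≤ N)] using hg (N - 1) (by omega) t) hμ
    rwa [hσ, sub_zero] at this
  refine le_weightedSum_of_le hρ (i := N - 1) (Finset.mem_Icc.2 ⟨by omega, le_rfl⟩) ?_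
  rw [show N - (N - 1) = 1 by omega, pow_one]
  calc ρ * (μ * δ) = μ * (δ * ρ) := by ring
    _ ≤ |g (N - 1) s| := (mul_le_mul_of_nonneg_left hfar hμ0).trans hmvt

lemma exists_le_abs_apply_of_le_scaledDist (hN : 2 ≤ N) (hε₀ : 0 < ε₀) (hlam : 0 < lam)
    (hρ : 0 < ρ) (hη : 0 < η) (hnear : |s - σ| ≤ ε₀ * ρ * (η / 4))
    (h : η ^ 2 / 4 ≤ scaledDist N ε₀ lam ρ g σ s) :
    ∃ i ∈ Finset.Icc 1 (N - 1), ε₀ * lam * ρ ^ (N - i) * min 1 (η ^ 2 / (8 * N)) ^ N ≤ |g i σ| := by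
  have hy : |ε₀⁻¹ * ρ⁻¹ * (s - σ)| ≤ η / 4 := by
    rwa [← mul_inv, abs_inv_mul_le_iff (by positivity)]
  have hN0 : (0 : ℝ) < N := by positivity
  have hsum : ∑ _i ∈ Finset.Icc 1 (N - 1), η ^ 2 / (8 * N) ≤ ∑ i ∈ Finset.Icc 1 (N - 1),
      |ε₀⁻¹ * lam⁻¹ * ρ ^ ((i : ℤ) - (N : ℤ)) * g i σ| ^ ((2 : ℝ) / ((N : ℝ) - (i : ℝ))) := by
    have hcard : ((N - 1 : ℕ) : ℝ) ≤ N := by exact_mod_cast Nat.sub_le N 1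
    have hsq : |ε₀⁻¹ * ρ⁻¹ * (s - σ)| ^ 2 ≤ (η / 4) ^ 2 := by gcongr
    calc ∑ _i ∈ Finset.Icc 1 (N - 1), η ^ 2 / (8 * N) = (N - 1 : ℕ) * (η ^ 2 / (8 * N)) := by simp
      _ ≤ N * (η ^ 2 / (8 * N)) := by gcongr
      _ = η ^ 2 / 8 := by field_simp
      _ ≤ η ^ 2 / 4 - (η / 4) ^ 2 := by linarith [sq_nonneg η]
      _ ≤ _ := by unfold scaledDist at h; linarith
  obtain ⟨i, hi, hβ⟩ := Finset.exists_le_of_sum_le ⟨1, Finset.mem_Icc.2 ⟨le_rfl, by omega⟩⟩ hsum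
  have hiN : i < N := by rw [Finset.mem_Icc] at hi; omega
  rw [scaledDist_term_eq hiN.le] at hβ
  have := min_one_pow_le_of_le_rpow_two_div (abs_nonneg _) (by positivity) (by omega)
    (Nat.sub_le N i) hβ
  exact ⟨i, hi, (le_abs_inv_mul_iff (by positivity)).1 this⟩

lemma le_weightedSum_of_near {δ : ℝ} (hN : 2 ≤ N)
    (hg : ∀ j < N, ∀ t, HasDerivAt (g j) (g (j + 1) t) t)
    (hε₀ : 0 < ε₀) (hε₀1 : ε₀ ≤ 1) (hlam : 0 < lam) (hρ : 0 < ρ) (hη : 1 ≤ η) (hb : 1 ≤ b)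
    (hgN : ∀ t ∈ Set.uIcc σ s, |g N t| ≤ b * lam)
    (hlow : η ^ 2 / 4 ≤ scaledDist N ε₀ lam ρ g σ s) (hup : scaledDist N ε₀ lam ρ g σ s ≤ 4 * η ^ 2)
    (hnear : |s - σ| ≤ δ * ρ) (hδ : δ ≤ ε₀ * (η / 4))
    (hδκ : δ * (2 * b * (4 * η) ^ N) ≤ ε₀ * min 1 (η ^ 2 / (8 * N)) ^ N) :
    ε₀ * min 1 (η ^ 2 / (8 * N)) ^ N / 2 * lam ≤ weightedSum N ρ g s := by
  set κ := min 1 (η ^ 2 / (8 * N)) ^ N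
  obtain ⟨i, hi, hσi⟩ := exists_le_abs_apply_of_le_scaledDist hN hε₀ hlam hρ (by linarith)
    (hnear.trans (by rw [mul_right_comm]; exact mul_le_mul_of_nonneg_right hδ hρ.le)) hlow
  have hiN : i < N := by rw [Finset.mem_Icc] at hi; omega
  have hderiv : ∀ t ∈ Set.uIcc σ s, |g (i + 1) t| ≤ b * lam * (4 * η * ρ) ^ (N - (i + 1)) :=
    fun t ht => abs_le_of_scaledDist_le_of_mem_uIcc hg hε₀ hε₀1 hlam hρ (by linarith) hb hgN hup
      (by omega) (by omega) ht
  have hincr : |g i s - g i σ| ≤ b * lam * (4 * η * ρ) ^ (N - (i + 1)) * |s - σ| := by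
    simpa [Real.norm_eq_abs] using (convex_uIcc σ s).norm_image_sub_le_of_norm_hasDerivWithin_le
      (fun u _ => (hg i hiN u).hasDerivWithinAt) (by simpa using hderiv)
      Set.left_mem_uIcc Set.right_mem_uIcc
  have hδ0 : 0 ≤ δ := nonneg_of_mul_nonneg_left ((abs_nonneg _).trans hnear) hρ
  have hsmall :
      b * lam * (4 * η * ρ) ^ (N - (i + 1)) * |s - σ| ≤ ρ ^ (N - i) * (ε₀ * κ / 2 * lam) :=
    calc b * lam * (4 * η * ρ) ^ (N - (i + 1)) * |s - σ|
        ≤ b * lam * (4 * η * ρ) ^ (N - (i + 1)) * (δ * ρ) := by gcongr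
      _ = ρ ^ (N - i) * (b * (4 * η) ^ (N - (i + 1)) * δ * lam) := by
          rw [show N - i = N - (i + 1) + 1 by omega, pow_succ, mul_pow]; ring
      _ ≤ ρ ^ (N - i) * (b * (4 * η) ^ N * δ * lam) := by
          gcongr
          · linarith
          · omega
      _ ≤ ρ ^ (N - i) * (ε₀ * κ / 2 * lam) := by gcongr; linarith
  refine le_weightedSum_of_le hρ hi ?_
  have hσi' : ρ ^ (N - i) * (ε₀ * κ * lam) ≤ |g i σ| := by linarith
  linarith [abs_sub_abs_le_abs_sub (g i σ) (g i s), abs_sub_comm (g i σ) (g i s)]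

lemma exists_pos_mul_le_weightedSum (hN : 2 ≤ N) {a : ℝ} (ha : 0 < a) (hb : 1 ≤ b)
    (hε₀ : 0 < ε₀) (hε₀1 : ε₀ ≤ 1) (hη : 1 ≤ η) :
    ∃ c > 0, ∀ {g : ℕ → ℝ → ℝ} {lam ρ σ s : ℝ},
      (∀ j < N, ∀ t, HasDerivAt (g j) (g (j + 1) t) t) → 0 < lam → 0 < ρ →
      (∀ t ∈ Set.uIcc σ s, a * lam ≤ |g N t|) → (∀ t ∈ Set.uIcc σ s, |g N t| ≤ b * lam) →
      g (N - 1) σ = 0 → η ^ 2 / 4 ≤ scaledDist N ε₀ lam ρ g σ s →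
      scaledDist N ε₀ lam ρ g σ s ≤ 4 * η ^ 2 → c * lam ≤ weightedSum N ρ g s := by
  set κ := min 1 (η ^ 2 / (8 * N)) ^ N
  have hκ : 0 < κ := pow_pos (lt_min one_pos (by positivity)) N
  have hbη : 0 < 2 * b * (4 * η) ^ N := mul_pos (by linarith) (pow_pos (by linarith) N)
  set δ := ε₀ * min (η / 4) (κ / (2 * b * (4 * η) ^ N))
  have hδ : 0 < δ := mul_pos hε₀ (lt_min (by positivity) (by positivity))
  have hδκ : δ * (2 * b * (4 * η) ^ N) ≤ ε₀ * κ :=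
    calc δ * (2 * b * (4 * η) ^ N)
        ≤ ε₀ * (κ / (2 * b * (4 * η) ^ N)) * (2 * b * (4 * η) ^ N) :=
          mul_le_mul_of_nonneg_right (mul_le_mul_of_nonneg_left (min_le_right _ _) hε₀.le) hbη.le
      _ = ε₀ * κ := by field_simp
  refine ⟨min (a * δ) (ε₀ * κ / 2), lt_min (by positivity) (by positivity), ?_⟩
  intro g lam ρ σ s hg hlam hρ hμ hgN hσ hlow hup
  rcases le_or_gt (δ * ρ) |s - σ| with hfar | hnear
  · calc min (a * δ) (ε₀ * κ / 2) * lam ≤ a * lam * δ := by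
          rw [mul_right_comm]; gcongr; exact min_le_left _ _
      _ ≤ _ := le_weightedSum_of_far hN hg hρ (by positivity) hμ hσ hfar
  · calc min (a * δ) (ε₀ * κ / 2) * lam ≤ ε₀ * κ / 2 * lam := by gcongr; exact min_le_right _ _
      _ ≤ _ := le_weightedSum_of_near hN hg hε₀ hε₀1 hlam hρ hη hb hgN hlow hup hnear.le
          (mul_le_mul_of_nonneg_left (min_le_left _ _) hε₀.le) hδκ

end Scalar

lemma hasDerivAt_inner_iteratedDeriv {F : Type*} [NormedAddCommGroup F] [InnerProductSpace ℝ F]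
    {γ : ℝ → F} {n : WithTop ℕ∞} (hγ : ContDiff ℝ n γ) (ξ : F) {j : ℕ} (hj : (j : WithTop ℕ∞) < n)
    (t : ℝ) : HasDerivAt (fun u => ⟪iteratedDeriv j γ u, ξ⟫) ⟪iteratedDeriv (j + 1) γ t, ξ⟫ t := by
  rw [iteratedDeriv_succ]
  simpa using ((hγ.differentiable_iteratedDeriv j hj) t).hasDerivAt.inner ℝ (hasDerivAt_const t ξ)

theorem stmt10 (d N : ℕ) (hN : 2 ≤ N) (hNd : N ≤ d) (B : ℝ) (hB : 1 < B) :
    ∃ ε₀star ∈ Set.Ioo (0 : ℝ) 1,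
      ∀ A C₁ : ℝ, 1 < A → 1 < C₁ →
      ∀ ε₀ : ℝ, 0 < ε₀ → ε₀ ≤ ε₀star →
      ∀ ε₁ ∈ Set.Ioo (0 : ℝ) 1,
      ∃ c C : ℝ, 0 < c ∧ c ≤ C ∧
        ∀ γ : ℝ → E d, CurveClass B N γ →
        ∀ lam : ℝ, 2 ≤ lam →
        ∀ ρ : ℝ, 0 < ρ → ρ ≤ (B ^ (2 * d))⁻¹ →
        ∀ ξ : E d, C₁ * lam ≤ ‖ξ‖ → ‖ξ‖ ≤ 2 * C₁ * lam →
        ∀ s ∈ segI, ∀ σ₀ ∈ segI,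
          ⟪iteratedDeriv (N - 1) γ σ₀, ξ⟫ = 0 →
          (∀ u ∈ segI, (10 * A)⁻¹ * ‖ξ‖ ≤ |⟪iteratedDeriv N γ u, ξ⟫|) →
          ε₁⁻¹ ^ 2 / 4 ≤
            (∑ i ∈ Finset.Icc 1 (N - 1),
                |ε₀⁻¹ * lam⁻¹ * ρ ^ ((i : ℤ) - (N : ℤ)) * ⟪iteratedDeriv i γ σ₀, ξ⟫| ^
                  ((2 : ℝ) / ((N : ℝ) - (i : ℝ))))
              + |ε₀⁻¹ * ρ⁻¹ * (s - σ₀)| ^ 2 →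
          (∑ i ∈ Finset.Icc 1 (N - 1),
                |ε₀⁻¹ * lam⁻¹ * ρ ^ ((i : ℤ) - (N : ℤ)) * ⟪iteratedDeriv i γ σ₀, ξ⟫| ^
                  ((2 : ℝ) / ((N : ℝ) - (i : ℝ))))
              + |ε₀⁻¹ * ρ⁻¹ * (s - σ₀)| ^ 2 ≤ 4 * ε₁⁻¹ ^ 2 →
          c * lam ≤
              (∑ i ∈ Finset.Icc 1 (N - 1),
                ρ ^ ((i : ℤ) - (N : ℤ)) * |⟪iteratedDeriv i γ s, ξ⟫|) ∧
            (∑ i ∈ Finset.Icc 1 (N - 1),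
                ρ ^ ((i : ℤ) - (N : ℤ)) * |⟪iteratedDeriv i γ s, ξ⟫|) ≤ C * lam := by
  refine ⟨1 / 2, by norm_num, fun A C₁ hA hC₁ ε₀ hε₀ hε₀le ε₁ hε₁ => ?_⟩
  have hη : 1 ≤ ε₁⁻¹ := (one_le_inv₀ hε₁.1).2 hε₁.2.le
  have hBC : 1 ≤ 2 * B * C₁ := by nlinarith
  obtain ⟨c, hc, hlower⟩ := exists_pos_mul_le_weightedSum (a := (10 * A)⁻¹ * C₁) hN
    (by positivity) hBC hε₀ (by linarith) hη
  refine ⟨c, max ((N - 1 : ℕ) * (2 * B * C₁ * (4 * ε₁⁻¹) ^ N)) c, hc, le_max_right _ _, ?_⟩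
  intro γ hγ lam hlam ρ hρ _ ξ hξl hξu s hs σ₀ hσ₀ hσ₀N hN_ge hlow hup
  set g : ℕ → ℝ → ℝ := fun j t => ⟪iteratedDeriv j γ t, ξ⟫
  have hg : ∀ j < N, ∀ t, HasDerivAt (g j) (g (j + 1) t) t := fun j hj =>
    hasDerivAt_inner_iteratedDeriv hγ.1 ξ (by exact_mod_cast (by omega : j < 2 * d))
  have hJ : Set.uIcc σ₀ s ⊆ segI := Set.uIcc_subset_Icc hσ₀ hs
  have hgN_ge : ∀ t ∈ Set.uIcc σ₀ s, (10 * A)⁻¹ * C₁ * lam ≤ |g N t| := fun t ht =>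
    calc (10 * A)⁻¹ * C₁ * lam = (10 * A)⁻¹ * (C₁ * lam) := mul_assoc _ _ _
      _ ≤ (10 * A)⁻¹ * ‖ξ‖ := by gcongr
      _ ≤ |g N t| := hN_ge t (hJ ht)
  have hgN_le : ∀ t ∈ Set.uIcc σ₀ s, |g N t| ≤ 2 * B * C₁ * lam := fun t ht =>
    calc |g N t| ≤ ‖iteratedDeriv N γ t‖ * ‖ξ‖ := abs_real_inner_le_norm _ _
      _ ≤ B * (2 * C₁ * lam) := by gcongr; exact hγ.2.1 N (by omega) t (hJ ht)
      _ = 2 * B * C₁ * lam := by ring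
  refine ⟨hlower hg (by linarith) hρ hgN_ge hgN_le hσ₀N hlow hup, ?_⟩
  refine (weightedSum_le hg hε₀ (by linarith) (by linarith) hρ hη hBC hgN_le hup).trans ?_
  gcongr
  exact le_max_left _ _

end
end

section
/- Let 2 ≤ N ≤ d, B > 1, γ ∈ 𝔊(B,N), s₀ ∈ I, 0 < ρ < 1, and let T and T* := (T^{−1})^⊤ be the associated rescaling maps. Then: (a) there exists C > 0 depending only on B, N and d such that |T* ξ| ≤ C ρ^{−N} |ξ| for every ξ ∈ ℝ^d; and (b) for every K ≥ 1 there exists c > 0, depending only on K, B, N and d, such that whenever η ∈ ℝ^d satisfies |⟨γ^{(i)}(s₀), η⟩| ≤ K ρ^{N−i} |η| for all 1 ≤ i ≤ N−1, one has, writing ξ := T^⊤ η (so that η = T* ξ), the lower bound |T* ξ| ≥ c ρ^{−N} |ξ|. -/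
open MeasureTheory Real Matrix
open scoped RealInnerProductSpace ENNReal

noncomputable section

/-! The Gram determinant bound makes `γ'(s₀), …, γ⁽ᴺ⁾(s₀)` a uniformly well-conditioned frame:
every vector splits as `∑ aⱼ γ⁽ʲ⁾(s₀) + w` with `w` orthogonal to the frame, `|aⱼ|` controlled
via Cramer's rule, and `‖w‖ ≤ ‖v‖`. On this splitting `T` acts diagonally with eigenvalues `ρʲ`
and `ρᴺ`, so `‖T⁻¹‖ = O(ρ^{-N})`, which gives (a). For (b), `‖T^⊤η‖² = ⟪η, T (T^⊤η)⟫`, and the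
hypothesis on `η` makes every term of this pairing `O(ρᴺ ‖η‖ ‖T^⊤η‖)`. -/

theorem Matrix.abs_inv_apply_le {ι : Type*} [Fintype ι] [DecidableEq ι]
    {M : Matrix ι ι ℝ} {b δ : ℝ} (hb : 1 ≤ b) (hM : ∀ i j, |M i j| ≤ b) (hδ : 0 < δ)
    (hdet : δ ≤ M.det) (i j : ι) :
    |M⁻¹ i j| ≤ (Fintype.card ι).factorial * b ^ Fintype.card ι / δ := by
  have hminor : ∀ k l, |M.updateRow j (Pi.single i 1) k l| ≤ b := by
    intro k l
    rcases eq_or_ne k j with rfl | hk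
    · rw [updateRow_self]
      rcases eq_or_ne l i with rfl | hl
      · simpa using hb
      · simpa [Pi.single_eq_of_ne hl] using zero_le_one.trans hb
    · rw [updateRow_ne hk]
      exact hM k l
  have hadj : |M.adjugate i j| ≤ (Fintype.card ι).factorial * b ^ Fintype.card ι := by
    rw [adjugate_apply]
    simpa using det_le (abv := AbsoluteValue.abs) hminor
  rw [inv_def, Ring.inverse_eq_inv', smul_apply, smul_eq_mul, abs_mul,
    abs_of_pos (inv_pos.2 (hδ.trans_le hdet)), inv_mul_eq_div]
  exact div_le_div₀ (by positivity) hadj hδ hdet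

section Decomposition

variable {F : Type*} [NormedAddCommGroup F] [InnerProductSpace ℝ F] {ι : Type*} [Fintype ι]

def HasBoundedDecomposition (u : ι → F) (C : ℝ) : Prop :=
  ∀ v : F, ∃ (a : ι → ℝ) (w : F), v = ∑ j, a j • u j + w ∧ (∀ j, ⟪u j, w⟫ = 0) ∧
    (∀ j, |a j| ≤ C * ‖v‖) ∧ ‖w‖ ≤ ‖v‖

theorem hasBoundedDecomposition_of_det_gram_ge [DecidableEq ι] {u : ι → F} {B δ : ℝ} (hB : 1 ≤ B)
    (hu : ∀ j, ‖u j‖ ≤ B) (hδ : 0 < δ) (hdet : δ ≤ (Matrix.gram ℝ u).det) :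
    HasBoundedDecomposition u
      (Fintype.card ι * (Fintype.card ι).factorial * B ^ (2 * Fintype.card ι + 1) / δ) := by
  intro v
  set G := Matrix.gram ℝ u
  set a := G⁻¹ *ᵥ fun k => ⟪u k, v⟫
  set w := v - ∑ j, a j • u j
  have hGa : G *ᵥ a = fun k => ⟪u k, v⟫ := by
    rw [Matrix.mulVec_mulVec, Matrix.mul_nonsing_inv _ (hδ.trans_le hdet).ne'.isUnit,
      Matrix.one_mulVec]
  have horth : ∀ k, ⟪u k, w⟫ = 0 := by
    intro k
    have : ⟪u k, ∑ j, a j • u j⟫ = (G *ᵥ a) k := by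
      simp [inner_sum, real_inner_smul_right, Matrix.mulVec, dotProduct, G, mul_comm]
    rw [inner_sub_right, this, hGa, sub_self]
  refine ⟨a, w, (add_sub_cancel _ _).symm, horth, fun i => ?_, ?_⟩
  · have hG : ∀ k l, |G k l| ≤ B ^ 2 := fun k l =>
      (abs_real_inner_le_norm _ _).trans (by rw [sq]; gcongr <;> exact hu _)
    calc |a i| = |∑ k, G⁻¹ i k * ⟪u k, v⟫| := rfl
      _ ≤ ∑ k, |G⁻¹ i k| * |⟪u k, v⟫| := by
          simpa only [abs_mul] using
            Finset.abs_sum_le_sum_abs (fun k => G⁻¹ i k * ⟪u k, v⟫) .univ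
      _ ≤ ∑ k : ι, (Fintype.card ι).factorial * (B ^ 2) ^ Fintype.card ι / δ * (B * ‖v‖) := by
          gcongr with k
          · exact G.abs_inv_apply_le (one_le_pow₀ hB) hG hδ hdet i k
          · exact (abs_real_inner_le_norm _ _).trans (by gcongr; exact hu k)
      _ = _ := by
          rw [Finset.sum_const, Finset.card_univ, nsmul_eq_mul, ← pow_mul]
          ring
  · have hpyth := norm_add_sq_eq_norm_sq_add_norm_sq_real (x := ∑ j, a j • u j) (y := w)
      (by simp [sum_inner, real_inner_smul_left, horth])
    rw [add_sub_cancel] at hpyth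
    nlinarith [norm_nonneg w, norm_nonneg v, mul_self_nonneg ‖∑ j, a j • u j‖]

end Decomposition

theorem LinearMap.norm_adjoint_apply_le_of_inner_le {F G : Type*} [NormedAddCommGroup F]
    [InnerProductSpace ℝ F] [FiniteDimensional ℝ F] [NormedAddCommGroup G]
    [InnerProductSpace ℝ G] [FiniteDimensional ℝ G] (A : F →ₗ[ℝ] G) {x : G} {M : ℝ}
    (hM : 0 ≤ M) (h : ∀ y, ⟪x, A y⟫ ≤ M * ‖y‖) : ‖adjoint A x‖ ≤ M := by
  have hsq : ‖adjoint A x‖ * ‖adjoint A x‖ ≤ M * ‖adjoint A x‖ := by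
    rw [← real_inner_self_eq_norm_mul_norm, adjoint_inner_left]
    exact h _
  nlinarith [norm_nonneg (adjoint A x)]

section Rescaling

variable {F : Type*} [NormedAddCommGroup F] [InnerProductSpace ℝ F] {n : ℕ}

/-- The rescaling map `T` of the paper, with `u j` standing for `γ⁽ʲ⁺¹⁾(s₀)`. -/
def IsRescaling (T : F ≃ₗ[ℝ] F) (u : Fin n → F) (ρ : ℝ) : Prop :=
  (∀ j : Fin n, T (u j) = ρ ^ (j + 1 : ℕ) • u j) ∧
    ∀ w, (∀ j, ⟪u j, w⟫ = 0) → T w = ρ ^ n • w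

namespace IsRescaling

variable {T : F ≃ₗ[ℝ] F} {u : Fin n → F} {ρ : ℝ}

theorem of_nat {f : ℕ → F}
    (hT₁ : ∀ i : ℕ, 1 ≤ i → i ≤ n → T (f i) = ρ ^ i • f i)
    (hT₂ : ∀ v : F, (∀ i : ℕ, 1 ≤ i → i ≤ n → ⟪f i, v⟫ = 0) → T v = ρ ^ n • v) :
    IsRescaling T (fun j : Fin n => f (j + 1)) ρ :=
  ⟨fun j => hT₁ _ j.succ_pos j.isLt, fun w hw => hT₂ w fun i hi₁ hi₂ => by
    obtain ⟨k, rfl⟩ := Nat.exists_eq_add_of_le' hi₁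
    exact hw ⟨k, hi₂⟩⟩

theorem norm_symm_apply_le (hT : IsRescaling T u ρ) (hρ₀ : 0 < ρ) (hρ₁ : ρ ≤ 1) {B C : ℝ}
    (hu : ∀ j, ‖u j‖ ≤ B) (hdec : HasBoundedDecomposition u C) (v : F) :
    ‖T.symm v‖ ≤ (n * C * B + 1) * (ρ ^ n)⁻¹ * ‖v‖ := by
  obtain ⟨a, w, rfl, horth, ha, hw⟩ := hdec v
  have hsymm_u : ∀ j : Fin n, T.symm (u j) = (ρ ^ (j + 1 : ℕ))⁻¹ • u j := fun j => by
    rw [T.symm_apply_eq, map_smul, hT.1, smul_smul, inv_mul_cancel₀ (by positivity), one_smul]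
  have hsymm_w : T.symm w = (ρ ^ n)⁻¹ • w := by
    rw [T.symm_apply_eq, map_smul, hT.2 w horth, smul_smul, inv_mul_cancel₀ (by positivity),
      one_smul]
  set v := ∑ j, a j • u j + w
  have hterm : ∀ j : Fin n, ‖a j • T.symm (u j)‖ ≤ (ρ ^ n)⁻¹ * (C * ‖v‖) * B := fun j => by
    rw [hsymm_u, smul_smul, norm_smul, Real.norm_eq_abs, abs_mul, abs_inv,
      abs_of_pos (pow_pos hρ₀ _), mul_comm |a j|]
    have hρj : (ρ ^ (j + 1 : ℕ))⁻¹ ≤ (ρ ^ n)⁻¹ :=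
      inv_anti₀ (by positivity) (pow_le_pow_of_le_one hρ₀.le hρ₁ j.isLt)
    have hCv : 0 ≤ C * ‖v‖ := (abs_nonneg _).trans (ha j)
    exact mul_le_mul (mul_le_mul hρj (ha j) (abs_nonneg _) (by positivity)) (hu j)
      (norm_nonneg _) (mul_nonneg (by positivity) hCv)
  calc ‖T.symm v‖ = ‖∑ j, a j • T.symm (u j) + T.symm w‖ := by simp [v, map_sum]
    _ ≤ ∑ _j : Fin n, (ρ ^ n)⁻¹ * (C * ‖v‖) * B + (ρ ^ n)⁻¹ * ‖v‖ := by
        refine norm_add_le_of_le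
          ((norm_sum_le _ _).trans (Finset.sum_le_sum fun j _ => hterm j)) ?_
        rw [hsymm_w, norm_smul, Real.norm_eq_abs, abs_inv, abs_of_pos (pow_pos hρ₀ _)]
        gcongr
    _ = (n * C * B + 1) * (ρ ^ n)⁻¹ * ‖v‖ := by
        rw [Finset.sum_const, Finset.card_univ, Fintype.card_fin, nsmul_eq_mul]
        ring

theorem inner_apply_le (hT : IsRescaling T u ρ) (hρ₀ : 0 ≤ ρ) {C K : ℝ}
    (hdec : HasBoundedDecomposition u C) {η : F}
    (hη : ∀ j : Fin n, |⟪u j, η⟫| ≤ K * ρ ^ (n - (j + 1)) * ‖η‖) (y : F) :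
    ⟪η, T y⟫ ≤ (n * C * K + 1) * ρ ^ n * ‖η‖ * ‖y‖ := by
  obtain ⟨a, w, rfl, horth, ha, hw⟩ := hdec y
  set y := ∑ j, a j • u j + w
  have hexpand : ⟪η, T y⟫ = ∑ j, a j * (ρ ^ (j + 1 : ℕ) * ⟪η, u j⟫) + ρ ^ n * ⟪η, w⟫ := by
    simp [y, map_sum, hT.1, hT.2 w horth, inner_add_right, inner_sum, real_inner_smul_right]
  have hterm : ∀ j : Fin n, a j * (ρ ^ (j + 1 : ℕ) * ⟪η, u j⟫) ≤ C * ‖y‖ * (K * ρ ^ n * ‖η‖) :=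
    fun j => by
    have hpow : ρ ^ n = ρ ^ (j + 1 : ℕ) * ρ ^ (n - (j + 1)) := by
      rw [← pow_add, Nat.add_sub_cancel' j.isLt]
    have hinner : ρ ^ (j + 1 : ℕ) * |⟪η, u j⟫| ≤ K * ρ ^ n * ‖η‖ := by
      rw [real_inner_comm, hpow]
      nlinarith [hη j, pow_nonneg hρ₀ (j + 1)]
    calc a j * (ρ ^ (j + 1 : ℕ) * ⟪η, u j⟫) ≤ |a j| * (ρ ^ (j + 1 : ℕ) * |⟪η, u j⟫|) := by
          refine (le_abs_self _).trans_eq ?_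
          rw [abs_mul, abs_mul, abs_of_nonneg (pow_nonneg hρ₀ _)]
      _ ≤ C * ‖y‖ * (K * ρ ^ n * ‖η‖) :=
          mul_le_mul (ha j) hinner (by positivity) ((abs_nonneg _).trans (ha j))
  have hw_term : ρ ^ n * ⟪η, w⟫ ≤ ρ ^ n * (‖η‖ * ‖y‖) := by
    gcongr
    exact (real_inner_le_norm _ _).trans (by gcongr)
  calc ⟪η, T y⟫ ≤ ∑ _j : Fin n, C * ‖y‖ * (K * ρ ^ n * ‖η‖) + ρ ^ n * (‖η‖ * ‖y‖) := by
        rw [hexpand]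
        exact add_le_add (Finset.sum_le_sum fun j _ => hterm j) hw_term
    _ = (n * C * K + 1) * ρ ^ n * ‖η‖ * ‖y‖ := by
        rw [Finset.sum_const, Finset.card_univ, Fintype.card_fin, nsmul_eq_mul]
        ring

variable [FiniteDimensional ℝ F]

theorem norm_adjoint_symm_apply_le (hT : IsRescaling T u ρ) (hρ₀ : 0 < ρ) (hρ₁ : ρ ≤ 1)
    {B C : ℝ} (hB : 0 ≤ B) (hC : 0 ≤ C) (hu : ∀ j, ‖u j‖ ≤ B)
    (hdec : HasBoundedDecomposition u C) (ξ : F) :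
    ‖LinearMap.adjoint T.symm.toLinearMap ξ‖ ≤ (n * C * B + 1) * (ρ ^ n)⁻¹ * ‖ξ‖ := by
  refine LinearMap.norm_adjoint_apply_le_of_inner_le _ (by positivity) fun y => ?_
  calc ⟪ξ, T.symm y⟫ ≤ ‖ξ‖ * ‖T.symm y‖ := real_inner_le_norm _ _
    _ ≤ ‖ξ‖ * ((n * C * B + 1) * (ρ ^ n)⁻¹ * ‖y‖) := by
        gcongr
        exact hT.norm_symm_apply_le hρ₀ hρ₁ hu hdec y
    _ = (n * C * B + 1) * (ρ ^ n)⁻¹ * ‖ξ‖ * ‖y‖ := by ring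

theorem norm_adjoint_apply_le (hT : IsRescaling T u ρ) (hρ₀ : 0 ≤ ρ) {C K : ℝ} (hC : 0 ≤ C)
    (hK : 0 ≤ K) (hdec : HasBoundedDecomposition u C) {η : F}
    (hη : ∀ j : Fin n, |⟪u j, η⟫| ≤ K * ρ ^ (n - (j + 1)) * ‖η‖) :
    ‖LinearMap.adjoint T.toLinearMap η‖ ≤ (n * C * K + 1) * ρ ^ n * ‖η‖ :=
  LinearMap.norm_adjoint_apply_le_of_inner_le _ (by positivity) (hT.inner_apply_le hρ₀ hdec hη)

end IsRescaling

theorem abs_inner_le_max_mul {f : ℕ → F} {η : F} {B K ρ : ℝ} (hρ : 0 ≤ ρ)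
    (hf : ∀ j : Fin n, ‖f (j + 1)‖ ≤ B)
    (hη : ∀ i : ℕ, 1 ≤ i → i ≤ n - 1 → |⟪f i, η⟫| ≤ K * ρ ^ (n - i) * ‖η‖) (j : Fin n) :
    |⟪f (j + 1), η⟫| ≤ max K B * ρ ^ (n - (j + 1)) * ‖η‖ := by
  rcases Nat.lt_or_ge ((j : ℕ) + 1) n with hj | hj
  · refine (hη ((j : ℕ) + 1) j.succ_pos (by omega)).trans ?_
    exact mul_le_mul_of_nonneg_right
      (mul_le_mul_of_nonneg_right (le_max_left K B) (by positivity)) (norm_nonneg η)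
  · rw [show n - ((j : ℕ) + 1) = 0 by omega, pow_zero, mul_one]
    calc |⟪f (j + 1), η⟫| ≤ ‖f (j + 1)‖ * ‖η‖ := abs_real_inner_le_norm _ _
      _ ≤ max K B * ‖η‖ := by
          gcongr
          exact (hf j).trans (le_max_right K B)

end Rescaling

def osculatingFrame {d : ℕ} (γ : ℝ → E d) (s : ℝ) (N : ℕ) : Fin N → E d :=
  fun j => iteratedDeriv (j + 1) γ s

theorem EuclideanSpace.gram_eq_transpose_mul {ι κ : Type*} [Fintype ι]
    (u : κ → EuclideanSpace ℝ ι) :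
    Matrix.gram ℝ u = (of fun i j => u j i)ᵀ * of fun i j => u j i := by
  simpa using gram_eq_conjTranspose_mul (EuclideanSpace.basisFun ι ℝ) u

namespace CurveClass

variable {d N : ℕ} {B : ℝ} {γ : ℝ → E d} {s : ℝ}

theorem norm_osculatingFrame_le (hγ : CurveClass B N γ) (hN : N ≤ 2 * d) (hs : s ∈ segI)
    (j : Fin N) : ‖osculatingFrame γ s N j‖ ≤ B :=
  hγ.2.1 _ (by omega) s hs

theorem hasBoundedDecomposition (hγ : CurveClass B N γ) (hB : 1 ≤ B) (hN : N ≤ 2 * d)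
    (hs : s ∈ segI) :
    HasBoundedDecomposition (osculatingFrame γ s N)
      (N * N.factorial * B ^ (2 * N + 1) / (B ^ 2)⁻¹) := by
  have hdet := hγ.2.2 s hs
  rw [← EuclideanSpace.gram_eq_transpose_mul] at hdet
  simpa using hasBoundedDecomposition_of_det_gram_ge hB (hγ.norm_osculatingFrame_le hN hs)
    (by positivity) hdet

end CurveClass

theorem stmt12_general (d N : ℕ) (hNd : N ≤ d) (B : ℝ) (hB : 1 < B) :
    (∃ C > 0, ∀ γ : ℝ → E d, CurveClass B N γ →
      ∀ s₀ ∈ segI, ∀ ρ : ℝ, 0 < ρ → ρ < 1 →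
        ∀ T : E d ≃ₗ[ℝ] E d,
          (∀ i : ℕ, 1 ≤ i → i ≤ N →
            T (iteratedDeriv i γ s₀) = ρ ^ i • iteratedDeriv i γ s₀) →
          (∀ v : E d, (∀ i : ℕ, 1 ≤ i → i ≤ N → ⟪iteratedDeriv i γ s₀, v⟫ = 0) →
            T v = ρ ^ N • v) →
          ∀ ξ : E d,
            ‖LinearMap.adjoint T.symm.toLinearMap ξ‖ ≤ C * ρ ^ (-(N : ℤ)) * ‖ξ‖) ∧
    (∀ K : ℝ, 1 ≤ K → ∃ c > 0, ∀ γ : ℝ → E d, CurveClass B N γ →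
      ∀ s₀ ∈ segI, ∀ ρ : ℝ, 0 < ρ → ρ < 1 →
        ∀ T : E d ≃ₗ[ℝ] E d,
          (∀ i : ℕ, 1 ≤ i → i ≤ N →
            T (iteratedDeriv i γ s₀) = ρ ^ i • iteratedDeriv i γ s₀) →
          (∀ v : E d, (∀ i : ℕ, 1 ≤ i → i ≤ N → ⟪iteratedDeriv i γ s₀, v⟫ = 0) →
            T v = ρ ^ N • v) →
          ∀ η : E d,
            (∀ i : ℕ, 1 ≤ i → i ≤ N - 1 →
              |⟪iteratedDeriv i γ s₀, η⟫| ≤ K * ρ ^ (N - i) * ‖η‖) →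
            c * ρ ^ (-(N : ℤ)) * ‖LinearMap.adjoint T.toLinearMap η‖ ≤ ‖η‖) := by
  have hB₀ : 0 < B := one_pos.trans hB
  set C : ℝ := N * N.factorial * B ^ (2 * N + 1) / (B ^ 2)⁻¹
  have hC : 0 ≤ C := by positivity
  have hzpow : ∀ ρ : ℝ, ρ ^ (-(N : ℤ)) = (ρ ^ N)⁻¹ := fun ρ => by
    rw [_root_.zpow_neg, zpow_natCast]
  refine ⟨⟨N * C * B + 1, by positivity, ?_⟩, fun K _ => ?_⟩
  · intro γ hγ s₀ hs₀ ρ hρ₀ hρ₁ T hT₁ hT₂ ξ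
    rw [hzpow]
    exact (IsRescaling.of_nat hT₁ hT₂).norm_adjoint_symm_apply_le hρ₀ hρ₁.le hB₀.le hC
      (hγ.norm_osculatingFrame_le (by omega) hs₀)
      (hγ.hasBoundedDecomposition hB.le (by omega) hs₀) ξ
  have hKB : 0 ≤ max K B := le_max_of_le_right hB₀.le
  have hD : 0 < N * C * max K B + 1 := by positivity
  refine ⟨(N * C * max K B + 1)⁻¹, inv_pos.2 hD, ?_⟩
  intro γ hγ s₀ hs₀ ρ hρ₀ hρ₁ T hT₁ hT₂ η hη
  have hbound := (IsRescaling.of_nat hT₁ hT₂).norm_adjoint_apply_le hρ₀.le hC hKB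
    (hγ.hasBoundedDecomposition hB.le (by omega) hs₀)
    (abs_inner_le_max_mul hρ₀.le (hγ.norm_osculatingFrame_le (by omega) hs₀) hη)
  rw [hzpow]
  calc _ ≤ (N * C * max K B + 1)⁻¹ * (ρ ^ N)⁻¹ * ((N * C * max K B + 1) * ρ ^ N * ‖η‖) := by
        gcongr
    _ = ‖η‖ := by field_simp

theorem stmt12 (d N : ℕ) (hN : 2 ≤ N) (hNd : N ≤ d) (B : ℝ) (hB : 1 < B) :
    (∃ C > 0, ∀ γ : ℝ → E d, CurveClass B N γ →
      ∀ s₀ ∈ segI, ∀ ρ : ℝ, 0 < ρ → ρ < 1 →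
        ∀ T : E d ≃ₗ[ℝ] E d,
          (∀ i : ℕ, 1 ≤ i → i ≤ N →
            T (iteratedDeriv i γ s₀) = ρ ^ i • iteratedDeriv i γ s₀) →
          (∀ v : E d, (∀ i : ℕ, 1 ≤ i → i ≤ N → ⟪iteratedDeriv i γ s₀, v⟫ = 0) →
            T v = ρ ^ N • v) →
          ∀ ξ : E d,
            ‖LinearMap.adjoint T.symm.toLinearMap ξ‖ ≤ C * ρ ^ (-(N : ℤ)) * ‖ξ‖) ∧
    (∀ K : ℝ, 1 ≤ K → ∃ c > 0, ∀ γ : ℝ → E d, CurveClass B N γ →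
      ∀ s₀ ∈ segI, ∀ ρ : ℝ, 0 < ρ → ρ < 1 →
        ∀ T : E d ≃ₗ[ℝ] E d,
          (∀ i : ℕ, 1 ≤ i → i ≤ N →
            T (iteratedDeriv i γ s₀) = ρ ^ i • iteratedDeriv i γ s₀) →
          (∀ v : E d, (∀ i : ℕ, 1 ≤ i → i ≤ N → ⟪iteratedDeriv i γ s₀, v⟫ = 0) →
            T v = ρ ^ N • v) →
          ∀ η : E d,
            (∀ i : ℕ, 1 ≤ i → i ≤ N - 1 →
              |⟪iteratedDeriv i γ s₀, η⟫| ≤ K * ρ ^ (N - i) * ‖η‖) →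
            c * ρ ^ (-(N : ℤ)) * ‖LinearMap.adjoint T.toLinearMap η‖ ≤ ‖η‖) :=
  stmt12_general d N hNd B hB
end
end

section
/- Let N ≥ 2, B ≥ 1 and K ≥ 1, and let γ : I → ℝ^d be C^N with sup_{s∈I} |γ^{(j)}(s)| ≤ B for 0 ≤ j ≤ N. Then there exists a constant C > 0, depending only on B, K, N and d, such that the following holds for every λ ≥ 2: if ξ ∈ ℝ^d satisfies |ξ| ≤ K λ, and s, σ₀ ∈ I satisfy |s − σ₀| ≤ K λ^{−1/N} and |⟨γ^{(j)}(σ₀), ξ⟩| ≤ K λ^{j/N} for all 1 ≤ j ≤ N−1, then |⟨γ^{(1)}(s), ξ⟩| ≤ C λ^{1/N}. -/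
/-!
Taylor-expand `f = ⟪γ', ξ⟫` at `σ₀` to order `N - 2`, with Lagrange remainder. The hypotheses give
`|f⁽ᵏ⁾(σ₀)| ≤ K λ^((k+1)/N)` for `k ≤ N - 2` and `|f⁽ᴺ⁻¹⁾| = |⟪γ⁽ᴺ⁾, ξ⟫| ≤ B K λ = B K λ^(N/N)`,
while `|s - σ₀|ᵏ ≤ Kᵏ λ^(-k/N)`; so each of the `N` terms of the expansion is `O(λ^(1/N))`.
-/

open MeasureTheory Real
open scoped RealInnerProductSpace

noncomputable section

open Set Finset Nat

theorem iteratedDeriv_inner_const {F : Type*} [NormedAddCommGroup F] [InnerProductSpace ℝ F]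
    {n : WithTop ℕ∞} {γ : ℝ → F} (hγ : ContDiff ℝ n γ) (v : F) {k : ℕ} (hk : k ≤ n)
    (t : ℝ) :
    iteratedDeriv k (fun u => ⟪γ u, v⟫) t = ⟪iteratedDeriv k γ t, v⟫ := by
  have h : (fun u => ⟪γ u, v⟫) = innerSL ℝ v ∘ γ := by
    funext u; exact real_inner_comm _ _
  rw [h, iteratedDeriv_eq_iteratedFDeriv, iteratedDeriv_eq_iteratedFDeriv,
    (innerSL ℝ v).iteratedFDeriv_comp_left hγ.contDiffAt hk]
  simp [real_inner_comm]

theorem abs_le_taylor_sum_add_of_abs_iteratedDeriv_le {f : ℝ → ℝ} {n : ℕ}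
    (hf : ContDiff ℝ (n + 1) f) {a x M : ℝ}
    (hM : ∀ y ∈ uIcc a x, |iteratedDeriv (n + 1) f y| ≤ M) :
    |f x| ≤ ∑ k ∈ range (n + 1), |x - a| ^ k / k ! * |iteratedDeriv k f a|
      + M * |x - a| ^ (n + 1) / (n + 1)! := by
  rcases eq_or_ne a x with rfl | hax
  · simp [Finset.sum_range_succ']
  obtain ⟨y, hy, hrem⟩ := taylor_mean_remainder_lagrange_iteratedDeriv hax hf.contDiffOn
  have htaylor : taylorWithinEval f n (uIcc a x) a x
      = ∑ k ∈ range (n + 1), ((k ! : ℝ)⁻¹ * (x - a) ^ k) • iteratedDeriv k f a := by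
    rw [taylor_within_apply]
    refine Finset.sum_congr rfl fun k hk => ?_
    have hkn : (k : WithTop ℕ∞) ≤ n + 1 := by
      exact_mod_cast (Nat.lt_succ_iff.mp (mem_range.mp hk)).trans n.le_succ
    rw [iteratedDerivWithin_eq_iteratedDeriv (uniqueDiffOn_uIcc hax) (hf.contDiffAt.of_le hkn)
      left_mem_uIcc]
  have hremainder :
      |f x - taylorWithinEval f n (uIcc a x) a x| ≤ M * |x - a| ^ (n + 1) / (n + 1)! := by
    rw [hrem, abs_div, abs_mul, abs_pow, Nat.abs_cast]
    gcongr
    exact hM y (uIoo_subset_uIcc_self hy)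
  have hsum : |taylorWithinEval f n (uIcc a x) a x|
      ≤ ∑ k ∈ range (n + 1), |x - a| ^ k / k ! * |iteratedDeriv k f a| := by
    rw [htaylor]
    refine (abs_sum_le_sum_abs _ _).trans (Finset.sum_le_sum fun k _ => le_of_eq ?_)
    rw [smul_eq_mul, abs_mul, abs_mul, abs_inv, abs_pow, Nat.abs_cast, div_eq_inv_mul]
  have := abs_sub_abs_le_abs_sub (f x) (taylorWithinEval f n (uIcc a x) a x)
  linarith

theorem rpow_neg_div_pow_mul_rpow {lam N : ℝ} (hlam : 0 < lam) (hN : N ≠ 0) (k : ℕ) :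
    (lam ^ (-1 / N)) ^ k * lam ^ ((k + 1) / N) = lam ^ (1 / N) := by
  rw [← rpow_natCast, ← rpow_mul hlam.le, ← rpow_add hlam]
  congr 1
  field_simp
  ring

theorem pow_mul_le_of_le_rpow {r A c K lam N : ℝ} {k : ℕ} (hlam : 0 < lam) (hN : N ≠ 0)
    (hr0 : 0 ≤ r) (hr : r ≤ K * lam ^ (-1 / N)) (hc : 0 ≤ c)
    (hA : A ≤ c * lam ^ ((k + 1) / N)) :
    r ^ k * A ≤ K ^ k * c * lam ^ (1 / N) :=
  calc r ^ k * A ≤ r ^ k * (c * lam ^ ((k + 1) / N)) :=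
        mul_le_mul_of_nonneg_left hA (pow_nonneg hr0 k)
    _ ≤ (K * lam ^ (-1 / N)) ^ k * (c * lam ^ ((k + 1) / N)) :=
        mul_le_mul_of_nonneg_right (pow_le_pow_left₀ hr0 hr k)
          (mul_nonneg hc (rpow_nonneg hlam.le _))
    _ = K ^ k * c * ((lam ^ (-1 / N)) ^ k * lam ^ ((k + 1) / N)) := by ring
    _ = K ^ k * c * lam ^ (1 / N) := by rw [rpow_neg_div_pow_mul_rpow hlam hN]

theorem abs_le_of_iteratedDeriv_le_rpow {f : ℝ → ℝ} {n : ℕ} (hf : ContDiff ℝ (n + 1) f)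
    {a x lam K M : ℝ} (hlam : 0 < lam) (hK : 1 ≤ K)
    (hx : |x - a| ≤ K * lam ^ (-(1 : ℝ) / ((n + 2 : ℕ) : ℝ)))
    (hder : ∀ k ≤ n, |iteratedDeriv k f a| ≤ K * lam ^ (((k : ℝ) + 1) / ((n + 2 : ℕ) : ℝ)))
    (hM : ∀ y ∈ uIcc a x, |iteratedDeriv (n + 1) f y| ≤ M * lam) :
    |f x| ≤ ((n + 1) * K ^ (n + 2) + M * K ^ (n + 1)) *
      lam ^ ((1 : ℝ) / ((n + 2 : ℕ) : ℝ)) := by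
  set N : ℝ := ((n + 2 : ℕ) : ℝ)
  set p := lam ^ (1 / N)
  have hN : N ≠ 0 := by positivity
  have hM0 : 0 ≤ M := nonneg_of_mul_nonneg_left ((abs_nonneg _).trans (hM a left_mem_uIcc)) hlam
  have hterm : ∀ k ∈ range (n + 1),
      |x - a| ^ k / k ! * |iteratedDeriv k f a| ≤ K ^ (n + 1) * K * p := by
    intro k hk
    have hkn : k ≤ n := Nat.lt_succ_iff.mp (mem_range.mp hk)
    calc |x - a| ^ k / k ! * |iteratedDeriv k f a| ≤ |x - a| ^ k * |iteratedDeriv k f a| := by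
          gcongr
          exact div_le_self (by positivity) (mod_cast k.factorial_pos)
      _ ≤ K ^ k * K * p :=
          pow_mul_le_of_le_rpow hlam hN (abs_nonneg _) hx (by linarith) (hder k hkn)
      _ ≤ K ^ (n + 1) * K * p := by
          gcongr
          omega
  have hremainder : M * lam * |x - a| ^ (n + 1) / (n + 1)! ≤ K ^ (n + 1) * M * p := by
    have hexp : (((n + 1 : ℕ) : ℝ) + 1) / N = 1 := by
      rw [div_eq_one_iff_eq hN]
      push_cast [N]
      ring
    calc M * lam * |x - a| ^ (n + 1) / (n + 1)! ≤ |x - a| ^ (n + 1) * (M * lam) := by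
          rw [mul_comm (M * lam)]
          exact div_le_self (by positivity) (mod_cast (n + 1).factorial_pos)
      _ ≤ K ^ (n + 1) * M * p :=
          pow_mul_le_of_le_rpow hlam hN (abs_nonneg _) hx hM0 (by rw [hexp, rpow_one])
  calc |f x| ≤ ∑ k ∈ range (n + 1), |x - a| ^ k / k ! * |iteratedDeriv k f a|
        + M * lam * |x - a| ^ (n + 1) / (n + 1)! :=
          abs_le_taylor_sum_add_of_abs_iteratedDeriv_le hf hM
    _ ≤ ∑ _k ∈ range (n + 1), K ^ (n + 1) * K * p + K ^ (n + 1) * M * p :=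
        add_le_add (sum_le_sum hterm) hremainder
    _ = _ := by
        rw [sum_const, card_range, nsmul_eq_mul]
        push_cast
        ring

theorem stmt17 (d N : ℕ) (hN : 2 ≤ N) (B K : ℝ) (hB : 1 ≤ B) (hK : 1 ≤ K)
    (γ : ℝ → E d) (hγ : ContDiff ℝ ((N : ℕ) : ℕ∞) γ)
    (hγB : ∀ j ≤ N, ∀ s ∈ segI, ‖iteratedDeriv j γ s‖ ≤ B) :
    ∃ C > 0, ∀ lam : ℝ, 2 ≤ lam →
      ∀ ξ : E d, ‖ξ‖ ≤ K * lam →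
      ∀ s ∈ segI, ∀ σ₀ ∈ segI,
        |s - σ₀| ≤ K * lam ^ (-(1 : ℝ) / (N : ℝ)) →
        (∀ j : ℕ, 1 ≤ j → j ≤ N - 1 →
          |⟪iteratedDeriv j γ σ₀, ξ⟫| ≤ K * lam ^ ((j : ℝ) / (N : ℝ))) →
        |⟪iteratedDeriv 1 γ s, ξ⟫| ≤ C * lam ^ ((1 : ℝ) / (N : ℝ)) := by
  obtain ⟨n, rfl⟩ : ∃ n, N = n + 2 := ⟨N - 2, by omega⟩
  have hB0 : 0 ≤ B := by linarith
  refine ⟨(n + 1) * K ^ (n + 2) + B * K * K ^ (n + 1), by positivity, ?_⟩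
  intro lam hlam ξ hξ s hs σ₀ hσ₀ hdist hlow
  set g : ℝ → ℝ := fun t => ⟪γ t, ξ⟫
  have hg : ContDiff ℝ (n + 1 + 1) g := (hγ.inner ℝ contDiff_const).of_le (by norm_cast)
  have hg' : ∀ k ≤ n + 1, ∀ t, iteratedDeriv k (deriv g) t = ⟪iteratedDeriv (k + 1) γ t, ξ⟫ :=
    fun k hk t => by
      rw [← iteratedDeriv_succ', iteratedDeriv_inner_const hγ ξ (by norm_cast; omega)]
  rw [← iteratedDeriv_inner_const hγ ξ (by norm_cast; omega), iteratedDeriv_one]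
  refine abs_le_of_iteratedDeriv_le_rpow hg.deriv' (by linarith) hK hdist (fun k hk => ?_)
    (fun y hy => ?_)
  · rw [hg' k (by omega)]
    convert hlow (k + 1) (by omega) (by omega) using 4
    push_cast; ring
  · rw [hg' (n + 1) le_rfl, mul_assoc]
    calc |⟪iteratedDeriv (n + 2) γ y, ξ⟫| ≤ ‖iteratedDeriv (n + 2) γ y‖ * ‖ξ‖ :=
          abs_real_inner_le_norm _ _
      _ ≤ B * (K * lam) := mul_le_mul (hγB (n + 2) le_rfl y (uIcc_subset_Icc hσ₀ hs hy)) hξ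
          (norm_nonneg _) hB0
end
end

section
/- Let γ : I → ℝ^d be a smooth non-degenerate curve and let 1 ≤ p < ∞. Then there exist c > 0 and δ₀ ∈ (0, 1/2], depending only on d, p and γ, such that for every δ ∈ (0, δ₀) there exists a non-zero, non-negative g ∈ L^p(ℝ^{d+1}) with ‖N_δ^γ g‖_{L^p(ℝ^d)} ≥ c δ^{1 − 2/p} ‖g‖_{L^p(ℝ^{d+1})}. In particular, for 1 ≤ p < 2 the L^p(ℝ^{d+1}) → L^p(ℝ^d) operator norm of N_δ^γ grows at least like δ^{1−2/p} as δ → 0. -/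
open MeasureTheory Real
open scoped RealInnerProductSpace ENNReal

noncomputable section

def Tube {d : ℕ} (γ : ℝ → E d) (δ : ℝ) (s : ℝ) : Set (E d × ℝ) :=
  {p | ‖p.1 - p.2 • γ s‖ ≤ δ ∧ p.2 ∈ segI}

def Avg {d : ℕ} (γ : ℝ → E d) (δ : ℝ) (g : E d × ℝ → ℝ) (x : E d) (s : ℝ) : ℝ :=
  ((volume (Tube γ δ s)).toReal)⁻¹ * ∫ p in Tube γ δ s, g (x - p.1, p.2)

def Nik {d : ℕ} (γ : ℝ → E d) (δ : ℝ) (g : E d × ℝ → ℝ) (x : E d) : ℝ :=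
  ⨆ s : segI, |Avg γ δ g x (s : ℝ)|

/-!
Take for `g` the indicator of the slab `B(0, 3δ) × [1/2 - δ/M, 1/2 + δ/M]`, where `M ≥ 1` bounds
`‖γ‖`; then `‖g‖_p ≈ δ^((d+1)/p)`. If `x` lies within `δ` of `γ(s)/2`, every point `(y, t)` of
`T_δ(s)` with `|t - 1/2| ≤ δ/M` has `(x - y, t)` in the slab, so `A_δ g(x, s) ≥ δ/M`.
Non-degeneracy gives `γ'(0) ≠ 0`, so near `0` the curve `s ↦ γ(s)/2` satisfies a lower Lipschitz
bound and its `δ`-neighbourhood contains `≳ 1/δ` disjoint `δ`-balls, a set of measure `≳ δ^(d-1)`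
on which `N_δ g ≥ δ/M`. Hence `‖N_δ g‖_p ≳ δ^(1 + (d-1)/p) = δ^(1 - 2/p) δ^((d+1)/p)`.
-/

open Metric Set Filter Topology

section ObliqueCylinder

variable {F : Type*} [NormedAddCommGroup F] [NormedSpace ℝ F]

def obliqueCylinder (v : F) (δ : ℝ) (J : Set ℝ) : Set (F × ℝ) :=
  {p | ‖p.1 - p.2 • v‖ ≤ δ ∧ p.2 ∈ J}

lemma obliqueCylinder_mono (v : F) (δ : ℝ) {J J' : Set ℝ} (h : J ⊆ J') :
    obliqueCylinder v δ J ⊆ obliqueCylinder v δ J' :=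
  fun _ hp => ⟨hp.1, h hp.2⟩

variable [MeasurableSpace F] [BorelSpace F] [SecondCountableTopology F]

lemma measurableSet_obliqueCylinder (v : F) (δ : ℝ) {J : Set ℝ} (hJ : MeasurableSet J) :
    MeasurableSet (obliqueCylinder v δ J) :=
  (measurableSet_le (measurable_fst.sub (measurable_snd.smul_const v)).norm measurable_const).inter
    (measurable_snd hJ)

lemma volume_obliqueCylinder (μ : Measure F) [μ.IsAddHaarMeasure] [SFinite μ] (v : F) (δ : ℝ)
    {J : Set ℝ} (hJ : MeasurableSet J) :
    (μ.prod volume) (obliqueCylinder v δ J) = μ (closedBall 0 δ) * volume J := by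
  rw [Measure.prod_apply_symm (measurableSet_obliqueCylinder v δ hJ),
    ← lintegral_indicator_const hJ]
  congr 1 with t
  by_cases ht : t ∈ J
  · have : (·, t) ⁻¹' obliqueCylinder v δ J = closedBall (t • v) δ := by
      ext x; simp [obliqueCylinder, ht, dist_eq_norm]
    rw [this, indicator_of_mem ht, Measure.addHaar_closedBall_center]
  · have : (·, t) ⁻¹' obliqueCylinder v δ J = ∅ := by
      ext x; simp [obliqueCylinder, ht]
    rw [this, indicator_of_notMem ht, measure_empty]

end ObliqueCylinder

lemma volume_segI : volume segI = 2 := by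
  rw [segI, Real.volume_Icc]; norm_num

lemma volume_tube {d : ℕ} (γ : ℝ → E d) (δ s : ℝ) :
    volume (Tube γ δ s) = volume (closedBall (0 : E d) δ) * 2 := by
  rw [show Tube γ δ s = obliqueCylinder (γ s) δ segI from rfl, Measure.volume_eq_prod,
    volume_obliqueCylinder _ _ _ (J := segI) measurableSet_Icc, volume_segI]

lemma deriv_ne_zero_of_det_iteratedDeriv_ne_zero {d : ℕ} (hd : 1 ≤ d) {γ : ℝ → E d} {s : ℝ}
    (h : (Matrix.of fun i j : Fin d => iteratedDeriv ((j : ℕ) + 1) γ s i).det ≠ 0) :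
    deriv γ s ≠ 0 := by
  intro h0
  refine h (Matrix.det_eq_zero_of_column_eq_zero ⟨0, hd⟩ fun i => ?_)
  simp [h0]

lemma exists_mul_sub_le_norm_sub_of_deriv_ne_zero {F : Type*} [NormedAddCommGroup F]
    [InnerProductSpace ℝ F] {γ : ℝ → F} (hγ : ContDiff ℝ 1 γ) {a : ℝ} (ha : deriv γ a ≠ 0) :
    ∃ m > 0, ∃ b > a, ∀ s ∈ Icc a b, ∀ s' ∈ Icc a b, s ≤ s' →
      m * (s' - s) ≤ ‖γ s' - γ s‖ := by
  set v := deriv γ a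
  have hv : 0 < ‖v‖ := norm_pos_iff.2 ha
  have hγd : ∀ s, HasDerivAt γ (deriv γ s) s :=
    fun s => (hγ.differentiable one_ne_zero s).hasDerivAt
  have hf : ∀ s, HasDerivAt (fun s => ⟪v, γ s⟫) ⟪v, deriv γ s⟫ s := fun s => by
    simpa using (hasDerivAt_const s v).inner ℝ (hγd s)
  -- Pairing with `v = γ'(a)` gives a real function with derivative `≥ ‖v‖² / 2` near `a`.
  have hnear : ∀ᶠ s in 𝓝 a, ‖v‖ ^ 2 / 2 < ⟪v, deriv γ s⟫ := by
    refine continuousAt_const.eventually_lt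
      (continuous_const.inner (hγ.continuous_deriv le_rfl)).continuousAt ?_
    rw [real_inner_self_eq_norm_sq]
    linarith [pow_pos hv 2]
  obtain ⟨b, hab, hb⟩ := mem_nhdsGE_iff_exists_Icc_subset.1 (nhdsWithin_le_nhds hnear)
  refine ⟨‖v‖ / 2, by positivity, b, hab, fun s hs s' hs' hss' => ?_⟩
  have hmono := (convex_Icc a b).mul_sub_le_image_sub_of_le_deriv
    (fun s _ => (hf s).continuousAt.continuousWithinAt)
    (fun s _ => (hf s).differentiableAt.differentiableWithinAt)
    (fun u hu => by rw [(hf u).deriv]; exact (hb (interior_subset hu)).le) s hs s' hs' hss'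
  have hcs : ⟪v, γ s'⟫ - ⟪v, γ s⟫ ≤ ‖v‖ * ‖γ s' - γ s‖ := by
    rw [← inner_sub_right]; exact real_inner_le_norm _ _
  have : ‖v‖ * (‖v‖ / 2 * (s' - s)) ≤ ‖v‖ * ‖γ s' - γ s‖ := by nlinarith
  exact le_of_mul_le_mul_left this hv

section Packing

variable {F : Type*} [NormedAddCommGroup F] [MeasurableSpace F] [BorelSpace F]
  (μ : Measure F) [μ.IsAddHaarMeasure]

lemma measure_biUnion_closedBall_of_pairwise_dist {ι : Type*} (t : Finset ι) (c : ι → F)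
    {δ : ℝ} (h : (t : Set ι).Pairwise fun j k => 2 * δ < dist (c j) (c k)) :
    μ (⋃ k ∈ t, closedBall (c k) δ) = t.card * μ (closedBall 0 δ) := by
  rw [measure_biUnion_finset _ fun _ _ => measurableSet_closedBall]
  · simp [Measure.addHaar_closedBall_center]
  · exact fun j hj k hk hjk => closedBall_disjoint_closedBall (by linarith [h hj hk hjk])

lemma exists_measurableSet_subset_biUnion_closedBall_of_separated {β : ℝ → F} {m a b δ : ℝ}
    (hm : 0 < m) (hab : a ≤ b) (hδ : 0 < δ)
    (hsep : ∀ s ∈ Icc a b, ∀ s' ∈ Icc a b, s ≤ s' → m * (s' - s) ≤ ‖β s' - β s‖) :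
    ∃ X, MeasurableSet X ∧ X ⊆ ⋃ s ∈ Icc a b, closedBall (β s) δ ∧
      ENNReal.ofReal ((b - a) * m / (3 * δ)) * μ (closedBall 0 δ) ≤ μ X := by
  -- Samples at spacing `3δ/m` are `3δ > 2δ` apart, so their `δ`-balls are disjoint.
  set Δ := 3 * δ / m
  have hΔ : 0 < Δ := by positivity
  set N := ⌊(b - a) / Δ⌋₊
  have hmem : ∀ k ∈ Finset.range (N + 1), a + k * Δ ∈ Icc a b := fun k hk => by
    have hkN : (k : ℝ) ≤ N := by exact_mod_cast Finset.mem_range_succ_iff.1 hk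
    have hN : (N : ℝ) * Δ ≤ b - a :=
      (le_div_iff₀ hΔ).1 (Nat.floor_le (div_nonneg (sub_nonneg.2 hab) hΔ.le))
    constructor <;> nlinarith
  have hsep' : ∀ j ∈ Finset.range (N + 1), ∀ k ∈ Finset.range (N + 1), j < k →
      2 * δ < dist (β (a + j * Δ)) (β (a + k * Δ)) := fun j hj k hk hjk => by
    have hjk' : (j : ℝ) + 1 ≤ k := by exact_mod_cast hjk
    have := hsep _ (hmem j hj) _ (hmem k hk) (by gcongr)
    have hmΔ : m * Δ = 3 * δ := by simp only [Δ]; field_simp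
    rw [dist_comm, dist_eq_norm]
    nlinarith
  refine ⟨⋃ k ∈ Finset.range (N + 1), closedBall (β (a + k * Δ)) δ,
    Finset.measurableSet_biUnion _ fun _ _ => measurableSet_closedBall,
    iUnion₂_subset fun k hk => subset_biUnion_of_mem (u := fun s => closedBall (β s) δ)
      (hmem k hk), ?_⟩
  calc ENNReal.ofReal ((b - a) * m / (3 * δ)) * μ (closedBall 0 δ)
      ≤ (Finset.range (N + 1)).card * μ (closedBall 0 δ) := by
        gcongr
        rw [Finset.card_range, ← ENNReal.ofReal_natCast, Nat.cast_add_one]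
        refine ENNReal.ofReal_le_ofReal ((Nat.lt_floor_add_one _).le.trans' (le_of_eq ?_))
        simp only [Δ]
        field_simp
    _ = _ := by
        refine (measure_biUnion_closedBall_of_pairwise_dist μ _ (fun k : ℕ => β (a + k * Δ))
          fun j hj k hk hne => ?_).symm
        rcases hne.lt_or_gt with hlt | hlt
        · exact hsep' j hj k hk hlt
        · rw [dist_comm]; exact hsep' k hk j hj hlt

end Packing

section Nikodym

variable {d : ℕ} (γ : ℝ → E d) (δ : ℝ)

lemma integrable_comp_sub_fst {g : E d × ℝ → ℝ} (hg : Integrable g) (x : E d) :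
    Integrable fun p : E d × ℝ => g (x - p.1, p.2) := by
  have h : MeasurePreserving (Prod.map (x - ·) id) (volume : Measure (E d × ℝ)) volume := by
    rw [Measure.volume_eq_prod]
    exact (Measure.measurePreserving_sub_left volume x).prod (MeasurePreserving.id volume)
  exact h.integrable_comp_of_integrable hg

lemma abs_avg_le_nik {g : E d × ℝ → ℝ} (hg : Integrable g) (x : E d) {s : ℝ} (hs : s ∈ segI) :
    |Avg γ δ g x s| ≤ Nik γ δ g x := by
  have hf := integrable_comp_sub_fst hg x
  -- The tubes all have the same volume, so one integral over the whole space bounds every average.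
  have hbdd : ∀ s, |Avg γ δ g x s| ≤
      (volume (closedBall (0 : E d) δ) * 2).toReal⁻¹ * ∫ p : E d × ℝ, |g (x - p.1, p.2)| :=
    fun s => by
      rw [Avg, volume_tube, abs_mul, abs_of_nonneg (by positivity)]
      gcongr
      exact abs_integral_le_integral_abs.trans
        (setIntegral_le_integral hf.abs (Eventually.of_forall fun _ => abs_nonneg _))
  exact le_ciSup (f := fun s : segI => |Avg γ δ g x s|)
    ⟨_, forall_mem_range.2 fun s => hbdd s⟩ ⟨s, hs⟩

lemma nik_nonneg (g : E d × ℝ → ℝ) (x : E d) : 0 ≤ Nik γ δ g x :=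
  Real.iSup_nonneg fun _ => abs_nonneg _

end Nikodym

lemma ENNReal.ofReal_mul_ofReal_mul_rpow {a b q : ℝ} (ha : 0 ≤ a) (hb : 0 ≤ b) (hq : 0 ≤ q)
    (V : ℝ≥0∞) :
    ENNReal.ofReal a * (ENNReal.ofReal b * V) ^ q = ENNReal.ofReal (a * b ^ q) * V ^ q := by
  rw [ENNReal.mul_rpow_of_nonneg _ _ hq, ENNReal.ofReal_rpow_of_nonneg hb hq, ← mul_assoc,
    ← ENNReal.ofReal_mul ha]

lemma Real.div_rpow_mul_rpow_one_sub_two_div_mul_rpow {A B δ : ℝ} (hA : 0 < A) (hB : 0 ≤ B)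
    (hδ : 0 < δ) (p : ℝ) (n : ℕ) :
    (B / A) ^ (1 / p) * δ ^ (1 - 2 / p) * (A * δ ^ (n + 2)) ^ (1 / p) =
      δ * (B * δ ^ n) ^ (1 / p) := by
  rw [pow_add, Real.mul_rpow hA.le (by positivity), Real.mul_rpow (by positivity) (by positivity),
    Real.mul_rpow hB (by positivity)]
  calc _ = ((B / A) ^ (1 / p) * A ^ (1 / p)) * (δ ^ (1 - 2 / p) * (δ ^ 2) ^ (1 / p)) *
        (δ ^ n) ^ (1 / p) := by ring
    _ = _ := by
      rw [← Real.mul_rpow (div_nonneg hB hA.le) hA.le, div_mul_cancel₀ _ hA.ne',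
        ← Real.rpow_natCast δ 2, ← Real.rpow_mul hδ.le, ← Real.rpow_add hδ, Nat.cast_ofNat,
        show 1 - 2 / p + 2 * (1 / p) = 1 by ring, Real.rpow_one]
      ring

lemma volume_closedBall_eq_ofReal_pow_mul (n : ℕ) {ρ : ℝ} (hρ : 0 ≤ ρ) :
    volume (closedBall (0 : E n) ρ) = ENNReal.ofReal (ρ ^ n) * volume (ball (0 : E n) 1) := by
  rw [Measure.addHaar_closedBall _ _ hρ, finrank_euclideanSpace_fin]

section Slab

variable {d : ℕ}

def slab (d : ℕ) (δ t r : ℝ) : Set (E d × ℝ) := closedBall 0 (3 * δ) ×ˢ Icc (t - r) (t + r)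

lemma measurableSet_slab (δ t r : ℝ) : MeasurableSet (slab d δ t r) :=
  measurableSet_closedBall.prod measurableSet_Icc

lemma volume_slab {δ : ℝ} (hδ : 0 ≤ δ) (t r : ℝ) :
    volume (slab d δ t r) = ENNReal.ofReal (2 * 3 ^ d * r * δ ^ d) * volume (ball (0 : E d) 1) := by
  rw [slab, Measure.volume_eq_prod, Measure.prod_prod, Real.volume_Icc,
    volume_closedBall_eq_ofReal_pow_mul _ (by positivity), mul_right_comm,
    ← ENNReal.ofReal_mul (by positivity)]
  congr 2
  ring

lemma memLp_indicator_slab (p : ℝ≥0∞) (δ t r : ℝ) :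
    MemLp ((slab d δ t r).indicator fun _ => (1 : ℝ)) p :=
  memLp_indicator_const p (measurableSet_slab δ t r) 1 <|
    Or.inr ((isCompact_closedBall _ _).prod isCompact_Icc).measure_lt_top.ne

lemma integrable_indicator_slab (δ t r : ℝ) :
    Integrable ((slab d δ t r).indicator fun _ => (1 : ℝ)) :=
  memLp_one_iff_integrable.1 (memLp_indicator_slab 1 δ t r)

lemma le_avg_indicator_slab (γ : ℝ → E d) {δ t r s : ℝ} (hδ : 0 < δ) (hr : 0 ≤ r)
    (hJ : Icc (t - r) (t + r) ⊆ segI) (hrγ : r * ‖γ s‖ ≤ δ) {x : E d}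
    (hx : x ∈ closedBall (t • γ s) δ) :
    r ≤ Avg γ δ ((slab d δ t r).indicator fun _ => 1) x s := by
  set f := fun p : E d × ℝ => (slab d δ t r).indicator (fun _ => (1 : ℝ)) (x - p.1, p.2)
  set C := obliqueCylinder (γ s) δ (Icc (t - r) (t + r))
  have hC : MeasurableSet C := measurableSet_obliqueCylinder _ _ measurableSet_Icc
  have hCf : ∀ q ∈ C, f q = 1 := fun q hq => by
    refine indicator_of_mem (show (x - q.1, q.2) ∈ slab d δ t r from ⟨?_, hq.2⟩) _
    have h1 : ‖x - t • γ s‖ ≤ δ := by rwa [← dist_eq_norm]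
    have h2 : ‖(t - q.2) • γ s‖ ≤ δ := by
      rw [norm_smul, Real.norm_eq_abs]
      refine le_trans ?_ hrγ
      gcongr
      exact abs_sub_le_iff.2 ⟨by linarith [hq.2.1], by linarith [hq.2.2]⟩
    have h3 : ‖q.2 • γ s - q.1‖ ≤ δ := by rw [norm_sub_rev]; exact hq.1
    have hsplit : x - q.1 - 0 = (x - t • γ s) + (t - q.2) • γ s + (q.2 • γ s - q.1) := by
      rw [sub_smul]; abel
    rw [mem_closedBall, dist_eq_norm, hsplit]
    linarith [norm_add₃_le (a := x - t • γ s) (b := (t - q.2) • γ s) (c := q.2 • γ s - q.1)]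
  have hV : 0 < (volume (closedBall (0 : E d) δ)).toReal :=
    ENNReal.toReal_pos (measure_closedBall_pos _ _ hδ).ne' measure_closedBall_lt_top.ne
  have hvolC : (volume C).toReal = (volume (closedBall (0 : E d) δ)).toReal * (2 * r) := by
    rw [Measure.volume_eq_prod, volume_obliqueCylinder _ _ _ measurableSet_Icc, Real.volume_Icc,
      ENNReal.toReal_mul, ENNReal.toReal_ofReal (by linarith)]
    ring
  have hint : (volume C).toReal ≤ ∫ p in Tube γ δ s, f p :=
    calc (volume C).toReal = ∫ p in C, f p := by
          rw [setIntegral_congr_fun hC hCf]; simp [measureReal_def]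
      _ ≤ ∫ p in Tube γ δ s, f p :=
          setIntegral_mono_set
            (integrable_comp_sub_fst (integrable_indicator_slab δ t r) x).integrableOn
            (ae_of_all _ fun _ => indicator_nonneg (fun _ _ => zero_le_one) _)
            (obliqueCylinder_mono _ _ hJ).eventuallyLE
  rw [Avg, volume_tube, ENNReal.toReal_mul, ENNReal.toReal_ofNat, le_inv_mul_iff₀ (by positivity)]
  linarith

lemma eLpNorm_indicator_slab {p : ℝ≥0∞} (hp0 : p ≠ 0) (hp : p ≠ ∞) (δ t r : ℝ) :
    eLpNorm ((slab d δ t r).indicator fun _ => (1 : ℝ)) p =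
      volume (slab d δ t r) ^ (1 / p.toReal) := by
  rw [eLpNorm_indicator_const (measurableSet_slab δ t r) hp0 hp, enorm_one, one_mul]

lemma eLpNorm_indicator_slab_ne_zero {p : ℝ≥0∞} (hp0 : p ≠ 0) (hp : p ≠ ∞) {δ r : ℝ}
    (hδ : 0 < δ) (hr : 0 < r) (t : ℝ) :
    eLpNorm ((slab d δ t r).indicator fun _ => (1 : ℝ)) p ≠ 0 := by
  rw [eLpNorm_indicator_slab hp0 hp, volume_slab hδ.le]
  exact (ENNReal.rpow_pos (ENNReal.mul_pos (ENNReal.ofReal_pos.2 (by positivity)).ne'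
    (measure_ball_pos _ _ one_pos).ne') (ENNReal.mul_ne_top ENNReal.ofReal_ne_top
      measure_ball_lt_top.ne)).ne'

lemma le_nik_indicator_slab (γ : ℝ → E d) {δ t r s : ℝ} (hδ : 0 < δ) (hr : 0 ≤ r)
    (hs : s ∈ segI) (hJ : Icc (t - r) (t + r) ⊆ segI) (hrγ : r * ‖γ s‖ ≤ δ) {x : E d}
    (hx : x ∈ closedBall (t • γ s) δ) :
    r ≤ Nik γ δ ((slab d δ t r).indicator fun _ => 1) x :=
  (le_avg_indicator_slab γ hδ hr hJ hrγ hx).trans <| (le_abs_self _).trans <|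
    abs_avg_le_nik γ δ (integrable_indicator_slab δ t r) x hs

lemma ofReal_mul_rpow_le_eLpNorm_nik_indicator_slab (γ : ℝ → E d) {δ t r : ℝ} (hδ : 0 < δ)
    (hr : 0 ≤ r) (hJ : Icc (t - r) (t + r) ⊆ segI) {S : Set ℝ} (hS : S ⊆ segI)
    (hrγ : ∀ s ∈ S, r * ‖γ s‖ ≤ δ) {X : Set (E d)} (hX : MeasurableSet X)
    (hXS : X ⊆ ⋃ s ∈ S, closedBall (t • γ s) δ) {p : ℝ≥0∞} (hp0 : p ≠ 0) (hp : p ≠ ∞) :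
    ENNReal.ofReal r * volume X ^ (1 / p.toReal) ≤
      eLpNorm (Nik γ δ ((slab d δ t r).indicator fun _ => 1)) p := by
  calc ENNReal.ofReal r * volume X ^ (1 / p.toReal) = eLpNorm (X.indicator fun _ => r) p := by
        rw [eLpNorm_indicator_const hX hp0 hp, Real.enorm_of_nonneg hr]
    _ ≤ _ := by
        refine eLpNorm_mono_real fun x => ?_
        by_cases hx : x ∈ X
        · obtain ⟨s, hs, hxs⟩ := mem_iUnion₂.1 (hXS hx)
          rw [indicator_of_mem hx, Real.norm_of_nonneg hr]
          exact le_nik_indicator_slab γ hδ hr (hS hs) hJ (hrγ s hs) hxs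
        · rw [indicator_of_notMem hx, norm_zero]
          exact nik_nonneg γ δ _ x

lemma ofReal_mul_rpow_le_eLpNorm_nik_indicator_slab_of_separated {γ : ℝ → E d} {M m η : ℝ}
    (hM : 1 ≤ M) (hm : 0 < m) (hη : 0 < η) (hη1 : η ≤ 1) (hγM : ∀ s ∈ Icc 0 η, ‖γ s‖ ≤ M)
    (hsep : ∀ s ∈ Icc 0 η, ∀ s' ∈ Icc 0 η, s ≤ s' → m * (s' - s) ≤ ‖γ s' - γ s‖)
    {p : ℝ≥0∞} (hp0 : p ≠ 0) (hp : p ≠ ∞) {δ : ℝ} (hδ : 0 < δ) (hδ2 : δ < 1 / 2) :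
    ENNReal.ofReal (δ / M) *
        (ENNReal.ofReal (η * m / (6 * δ)) * volume (closedBall (0 : E d) δ)) ^ (1 / p.toReal) ≤
      eLpNorm (Nik γ δ ((slab d δ (1 / 2) (δ / M)).indicator fun _ => 1)) p := by
  have hM0 : 0 < M := one_pos.trans_le hM
  have hr : 0 < δ / M := div_pos hδ hM0
  have hrδ : δ / M ≤ δ := div_le_self hδ.le hM
  obtain ⟨X, hX, hXS, hXvol⟩ := exists_measurableSet_subset_biUnion_closedBall_of_separated volume
    (β := fun s => (1 / 2 : ℝ) • γ s) (half_pos hm) hη.le hδ fun s hs s' hs' hss' => by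
      rw [← smul_sub, norm_smul, Real.norm_of_nonneg (by norm_num)]
      linarith [hsep s hs s' hs' hss']
  calc _ ≤ ENNReal.ofReal (δ / M) * volume X ^ (1 / p.toReal) := by
        gcongr
        convert hXvol using 3
        ring
    _ ≤ _ := ofReal_mul_rpow_le_eLpNorm_nik_indicator_slab γ hδ hr.le
          (Icc_subset_Icc (by linarith) (by linarith)) (Icc_subset_Icc (by norm_num) hη1)
          (fun s hs => (mul_le_mul_of_nonneg_left (hγM s hs) hr.le).trans_eq
            (div_mul_cancel₀ δ hM0.ne')) hX hXS hp0 hp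

theorem ofReal_mul_eLpNorm_indicator_slab_le_eLpNorm_nik (hd : 1 ≤ d) {γ : ℝ → E d}
    {M m η : ℝ} (hM : 1 ≤ M) (hm : 0 < m) (hη : 0 < η) (hη1 : η ≤ 1)
    (hγM : ∀ s ∈ Icc 0 η, ‖γ s‖ ≤ M)
    (hsep : ∀ s ∈ Icc 0 η, ∀ s' ∈ Icc 0 η, s ≤ s' → m * (s' - s) ≤ ‖γ s' - γ s‖)
    {p : ℝ} (hp : 0 < p) {δ : ℝ} (hδ : 0 < δ) (hδ2 : δ < 1 / 2) :
    ENNReal.ofReal (M⁻¹ * (η * m / 6 / (2 * 3 ^ d / M)) ^ (1 / p) * δ ^ (1 - 2 / p)) *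
        eLpNorm ((slab d δ (1 / 2) (δ / M)).indicator fun _ => (1 : ℝ)) (ENNReal.ofReal p) ≤
      eLpNorm (Nik γ δ ((slab d δ (1 / 2) (δ / M)).indicator fun _ => 1)) (ENNReal.ofReal p) := by
  obtain ⟨n, rfl⟩ : ∃ n, d = n + 1 := ⟨d - 1, by omega⟩
  have hM0 : 0 < M := one_pos.trans_le hM
  have hP0 : ENNReal.ofReal p ≠ 0 := (ENNReal.ofReal_pos.2 hp).ne'
  have hPp : (ENNReal.ofReal p).toReal = p := ENNReal.toReal_ofReal hp.le
  have h := Real.div_rpow_mul_rpow_one_sub_two_div_mul_rpow (A := 2 * 3 ^ (n + 1) / M)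
    (B := η * m / 6) (by positivity) (by positivity) hδ p n
  refine le_of_eq_of_le ?_ (ofReal_mul_rpow_le_eLpNorm_nik_indicator_slab_of_separated hM hm hη
    hη1 hγM hsep hP0 ENNReal.ofReal_ne_top hδ hδ2)
  rw [eLpNorm_indicator_slab hP0 ENNReal.ofReal_ne_top, volume_slab hδ.le,
    volume_closedBall_eq_ofReal_pow_mul _ hδ.le, ← mul_assoc, ← ENNReal.ofReal_mul (by positivity),
    hPp, ENNReal.ofReal_mul_ofReal_mul_rpow (by positivity) (by positivity) (by positivity),
    ENNReal.ofReal_mul_ofReal_mul_rpow (by positivity) (by positivity) (by positivity)]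
  congr 2
  rw [show 2 * 3 ^ (n + 1) * (δ / M) * δ ^ (n + 1) = 2 * 3 ^ (n + 1) / M * δ ^ (n + 2) by ring,
    show η * m / (6 * δ) * δ ^ (n + 1) = η * m / 6 * δ ^ n by rw [pow_succ]; field_simp,
    mul_assoc _ _ (δ ^ _), mul_assoc, h]
  ring

end Slab

theorem stmt18 (d : ℕ) (hd : 1 ≤ d) (γ : ℝ → E d) (hγ : ContDiff ℝ (⊤ : ℕ∞) γ)
    (hnd : ∀ s ∈ segI,
      (Matrix.of fun i j : Fin d => iteratedDeriv ((j : ℕ) + 1) γ s i).det ≠ 0)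
    (p : ℝ) (hp : 1 ≤ p) :
    ∃ c > 0, ∃ δ₀ : ℝ, 0 < δ₀ ∧ δ₀ ≤ 1 / 2 ∧
      ∀ δ : ℝ, 0 < δ → δ < δ₀ →
        ∃ g : E d × ℝ → ℝ, MemLp g (ENNReal.ofReal p) volume ∧
          eLpNorm g (ENNReal.ofReal p) volume ≠ 0 ∧ (∀ q, 0 ≤ g q) ∧
          ENNReal.ofReal (c * δ ^ (1 - 2 / p)) * eLpNorm g (ENNReal.ofReal p) volume
            ≤ eLpNorm (Nik γ δ g) (ENNReal.ofReal p) volume := by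
  have hp0 : 0 < p := one_pos.trans_le hp
  obtain ⟨m, hm, b, hb, hsep⟩ := exists_mul_sub_le_norm_sub_of_deriv_ne_zero
    (hγ.of_le (by exact_mod_cast le_top))
    (deriv_ne_zero_of_det_iteratedDeriv_ne_zero hd (hnd 0 ⟨by norm_num, by norm_num⟩))
  set η := min b 1
  have hη : 0 < η := lt_min hb one_pos
  obtain ⟨K, hK⟩ := (isCompact_Icc (a := 0) (b := η)).exists_bound_of_continuousOn
    hγ.continuous.continuousOn
  set M := max K 1
  have hM : 0 < M := one_pos.trans_le (le_max_right _ _)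
  refine ⟨M⁻¹ * (η * m / 6 / (2 * 3 ^ d / M)) ^ (1 / p), by positivity, 1 / 2, by norm_num, le_rfl,
    fun δ hδ hδ₀ => ⟨_, memLp_indicator_slab _ δ (1 / 2) (δ / M),
      eLpNorm_indicator_slab_ne_zero (ENNReal.ofReal_pos.2 hp0).ne' ENNReal.ofReal_ne_top hδ
        (div_pos hδ hM) _,
      fun _ => indicator_nonneg (fun _ _ => zero_le_one) _, ?_⟩⟩
  have hIcc : Icc 0 η ⊆ Icc 0 b := Icc_subset_Icc_right (min_le_left _ _)
  exact ofReal_mul_eLpNorm_indicator_slab_le_eLpNorm_nik hd (le_max_right _ _) hm hη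
    (min_le_right _ _) (fun s hs => (hK s hs).trans (le_max_left _ _))
    (fun s hs s' hs' => hsep s (hIcc hs) s' (hIcc hs')) hp0 hδ hδ₀
end
end
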